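/- arXiv:1305.6296 — 5 statements merged into one kernel-verified Lean document; each statement's English description precedes it below -/
import Mathlib

section
/- Let β > 0 and Re > 0 be real numbers. Let u, w, p : ℝ×ℝ×ℝ → ℝ (functions of (x,z,t)) and η : ℝ×ℝ → ℝ (function of (x,t)) be infinitely differentiable and satisfy, for all x ∈ ℝ, z ∈ [0,1], t ∈ ℝ: ∂_t u − (√β/Re)∂_x²u − (1/(Re√β))∂_z²u + ∂_x p = 0; ∂_t w − (√β/Re)∂_x²w − (1/(Re√β))∂_z²w + ∂_z p = 0; β∂_x u + ∂_z w = 0; at z = 1: η − p − (2√β/Re)∂_x u = 0, ∂_z u + ∂_x w = 0, and ∂_t η − w/β = 0; and at z = 0: u = 0 and w = 0. Then for all x ∈ ℝ, z ∈ [0,1], t ∈ ℝ: (∂_z² + β∂_x²)(∂_z² + β∂_x² − Re·√β·∂_t) w = 0; and moreover, for all x, t: ∂_z w(x,0,t) = 0, w(x,0,t) = 0, ∂_z²w(x,1,t) − β∂_x²w(x,1,t) = 0, and ∂_x²w(x,1,t) − ∂_z∂_t²w(x,1,t) + (3√β/Re)∂_x²∂_z∂_t w(x,1,t) + (1/(Re√β))∂_z³∂_t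 w(x,1,t) = 0. -/
open Real

/-- The operator ∂_z² + β∂_x² acting on functions of (x, z, t). -/
noncomputable def LaplOp (β : ℝ) (f : ℝ → ℝ → ℝ → ℝ) : ℝ → ℝ → ℝ → ℝ :=
  fun x z t =>
    deriv (fun z' => deriv (fun z'' => f x z'' t) z') z +
      β * deriv (fun x' => deriv (fun x'' => f x'' z t) x') x

/-- The operator ∂_z² + β∂_x² − Re·√β·∂_t acting on functions of (x, z, t). -/
noncomputable def ViscOp (β Re : ℝ) (f : ℝ → ℝ → ℝ → ℝ) : ℝ → ℝ → ℝ → ℝ :=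
  fun x z t => LaplOp β f x z t - Re * Real.sqrt β * deriv (fun t' => f x z t') t

namespace NS

def J (f : ℝ → ℝ → ℝ → ℝ) : ℝ × ℝ × ℝ → ℝ := fun q => f q.1 q.2.1 q.2.2

def Smooth (f : ℝ → ℝ → ℝ → ℝ) : Prop := ContDiff ℝ (⊤ : ℕ∞) (J f)

noncomputable def Dx (f : ℝ → ℝ → ℝ → ℝ) : ℝ → ℝ → ℝ → ℝ :=
  fun x z t => deriv (fun x' => f x' z t) x
noncomputable def Dz (f : ℝ → ℝ → ℝ → ℝ) : ℝ → ℝ → ℝ → ℝ :=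
  fun x z t => deriv (fun z' => f x z' t) z
noncomputable def Dt (f : ℝ → ℝ → ℝ → ℝ) : ℝ → ℝ → ℝ → ℝ :=
  fun x z t => deriv (fun t' => f x z t') t

noncomputable def pd (v : ℝ × ℝ × ℝ) (f : ℝ → ℝ → ℝ → ℝ) : ℝ → ℝ → ℝ → ℝ :=
  fun x z t => fderiv ℝ (J f) (x, z, t) v

variable {f g : ℝ → ℝ → ℝ → ℝ} {x z t : ℝ}

lemma hasDerivAt_secX (hf : Smooth f) (x z t : ℝ) :
    HasDerivAt (fun x' => f x' z t) (fderiv ℝ (J f) (x, z, t) (1, 0, 0)) x := by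
  have h := (hf.differentiable (by simp) (x, z, t)).hasFDerivAt
  have hg : HasDerivAt (fun x' : ℝ => ((x', z, t) : ℝ × ℝ × ℝ)) ((1:ℝ), (0:ℝ), (0:ℝ)) x :=
    (hasDerivAt_id x).prodMk ((hasDerivAt_const x z).prodMk (hasDerivAt_const x t))
  exact h.comp_hasDerivAt x hg

lemma hasDerivAt_secZ (hf : Smooth f) (x z t : ℝ) :
    HasDerivAt (fun z' => f x z' t) (fderiv ℝ (J f) (x, z, t) (0, 1, 0)) z := by
  have h := (hf.differentiable (by simp) (x, z, t)).hasFDerivAt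
  have hg : HasDerivAt (fun z' : ℝ => ((x, z', t) : ℝ × ℝ × ℝ)) ((0:ℝ), (1:ℝ), (0:ℝ)) z :=
    (hasDerivAt_const z x).prodMk ((hasDerivAt_id z).prodMk (hasDerivAt_const z t))
  exact h.comp_hasDerivAt z hg

lemma hasDerivAt_secT (hf : Smooth f) (x z t : ℝ) :
    HasDerivAt (fun t' => f x z t') (fderiv ℝ (J f) (x, z, t) (0, 0, 1)) t := by
  have h := (hf.differentiable (by simp) (x, z, t)).hasFDerivAt
  have hg : HasDerivAt (fun t' : ℝ => ((x, z, t') : ℝ × ℝ × ℝ)) ((0:ℝ), (0:ℝ), (1:ℝ)) t :=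
    (hasDerivAt_const t x).prodMk ((hasDerivAt_const t z).prodMk (hasDerivAt_id t))
  exact h.comp_hasDerivAt t hg

lemma hasDerivAt_DX (hf : Smooth f) (x z t : ℝ) :
    HasDerivAt (fun x' => f x' z t) (Dx f x z t) x :=
  (hasDerivAt_secX hf x z t).differentiableAt.hasDerivAt

lemma hasDerivAt_DZ (hf : Smooth f) (x z t : ℝ) :
    HasDerivAt (fun z' => f x z' t) (Dz f x z t) z :=
  (hasDerivAt_secZ hf x z t).differentiableAt.hasDerivAt

lemma hasDerivAt_DT (hf : Smooth f) (x z t : ℝ) :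
    HasDerivAt (fun t' => f x z t') (Dt f x z t) t :=
  (hasDerivAt_secT hf x z t).differentiableAt.hasDerivAt

lemma Dx_eq_pd (hf : Smooth f) : Dx f = pd (1, 0, 0) f :=
  funext fun x => funext fun z => funext fun t => (hasDerivAt_secX hf x z t).deriv

lemma Dz_eq_pd (hf : Smooth f) : Dz f = pd (0, 1, 0) f :=
  funext fun x => funext fun z => funext fun t => (hasDerivAt_secZ hf x z t).deriv

lemma Dt_eq_pd (hf : Smooth f) : Dt f = pd (0, 0, 1) f :=
  funext fun x => funext fun z => funext fun t => (hasDerivAt_secT hf x z t).deriv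

lemma J_pd (v : ℝ × ℝ × ℝ) (f : ℝ → ℝ → ℝ → ℝ) :
    J (pd v f) = fun q => fderiv ℝ (J f) q v := rfl

lemma Smooth.pd (hf : Smooth f) (v : ℝ × ℝ × ℝ) : Smooth (NS.pd v f) := by
  unfold Smooth
  rw [J_pd]
  exact (hf.fderiv_right (by simp)).clm_apply contDiff_const

lemma Smooth.dx (hf : Smooth f) : Smooth (Dx f) := by
  rw [Dx_eq_pd hf]; exact hf.pd _

lemma Smooth.dz (hf : Smooth f) : Smooth (Dz f) := by
  rw [Dz_eq_pd hf]; exact hf.pd _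

lemma Smooth.dt (hf : Smooth f) : Smooth (Dt f) := by
  rw [Dt_eq_pd hf]; exact hf.pd _

lemma pd_comm (hf : Smooth f) (v w : ℝ × ℝ × ℝ) : pd v (pd w f) = pd w (pd v f) := by
  funext x z t
  show fderiv ℝ (J (pd w f)) (x,z,t) v = fderiv ℝ (J (pd v f)) (x,z,t) w
  rw [J_pd, J_pd]
  have hsym : IsSymmSndFDerivAt ℝ (J f) (x, z, t) :=
    (hf.contDiffAt).isSymmSndFDerivAt (by rw [minSmoothness_of_isRCLikeNormedField]; exact WithTop.coe_le_coe.mpr le_top)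
  have key : ∀ a : ℝ × ℝ × ℝ,
      fderiv ℝ (fun q => fderiv ℝ (J f) q a) (x,z,t)
        = (fderiv ℝ (fderiv ℝ (J f)) (x,z,t)).flip a := by
    intro a
    have hdiff : DifferentiableAt ℝ (fderiv ℝ (J f)) (x,z,t) :=
      ((hf.fderiv_right (m := (⊤ : ℕ∞)) (by simp)).differentiable (by simp)) (x,z,t)
    rw [fderiv_clm_apply hdiff (differentiableAt_const a)]
    simp
  rw [key w, key v]
  simp only [ContinuousLinearMap.flip_apply]
  exact (hsym w v).symm

lemma comm_zx (hf : Smooth f) : Dz (Dx f) = Dx (Dz f) := by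
  rw [Dx_eq_pd hf, Dz_eq_pd (hf.pd _), Dz_eq_pd hf, Dx_eq_pd (hf.pd _), pd_comm hf]
lemma comm_tx (hf : Smooth f) : Dt (Dx f) = Dx (Dt f) := by
  rw [Dx_eq_pd hf, Dt_eq_pd (hf.pd _), Dt_eq_pd hf, Dx_eq_pd (hf.pd _), pd_comm hf]
lemma comm_tz (hf : Smooth f) : Dt (Dz f) = Dz (Dt f) := by
  rw [Dz_eq_pd hf, Dt_eq_pd (hf.pd _), Dt_eq_pd hf, Dz_eq_pd (hf.pd _), pd_comm hf]

lemma contZ (hf : Smooth f) (x t : ℝ) : Continuous (fun z => f x z t) := by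
  have : (fun z => f x z t) = (J f) ∘ (fun z : ℝ => (x, z, t)) := rfl
  rw [this]
  exact hf.continuous.comp (by fun_prop)

lemma hasDerivAt_combX {f1 f2 f3 f4 : ℝ → ℝ → ℝ → ℝ}
    (h1 : Smooth f1) (h2 : Smooth f2) (h3 : Smooth f3) (h4 : Smooth f4)
    (c1 c2 c3 c4 x z t : ℝ) :
    HasDerivAt (fun x' => c1 * f1 x' z t + c2 * f2 x' z t + c3 * f3 x' z t + c4 * f4 x' z t)
      (c1 * Dx f1 x z t + c2 * Dx f2 x z t + c3 * Dx f3 x z t + c4 * Dx f4 x z t) x :=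
  ((((hasDerivAt_DX h1 x z t).const_mul c1).add ((hasDerivAt_DX h2 x z t).const_mul c2)).add
    ((hasDerivAt_DX h3 x z t).const_mul c3)).add ((hasDerivAt_DX h4 x z t).const_mul c4)

lemma hasDerivAt_combZ {f1 f2 f3 f4 : ℝ → ℝ → ℝ → ℝ}
    (h1 : Smooth f1) (h2 : Smooth f2) (h3 : Smooth f3) (h4 : Smooth f4)
    (c1 c2 c3 c4 x z t : ℝ) :
    HasDerivAt (fun z' => c1 * f1 x z' t + c2 * f2 x z' t + c3 * f3 x z' t + c4 * f4 x z' t)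
      (c1 * Dz f1 x z t + c2 * Dz f2 x z t + c3 * Dz f3 x z t + c4 * Dz f4 x z t) z :=
  ((((hasDerivAt_DZ h1 x z t).const_mul c1).add ((hasDerivAt_DZ h2 x z t).const_mul c2)).add
    ((hasDerivAt_DZ h3 x z t).const_mul c3)).add ((hasDerivAt_DZ h4 x z t).const_mul c4)

lemma hasDerivAt_combT {f1 f2 f3 f4 : ℝ → ℝ → ℝ → ℝ}
    (h1 : Smooth f1) (h2 : Smooth f2) (h3 : Smooth f3) (h4 : Smooth f4)
    (c1 c2 c3 c4 x z t : ℝ) :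
    HasDerivAt (fun t' => c1 * f1 x z t' + c2 * f2 x z t' + c3 * f3 x z t' + c4 * f4 x z t')
      (c1 * Dt f1 x z t + c2 * Dt f2 x z t + c3 * Dt f3 x z t + c4 * Dt f4 x z t) t :=
  ((((hasDerivAt_DT h1 x z t).const_mul c1).add ((hasDerivAt_DT h2 x z t).const_mul c2)).add
    ((hasDerivAt_DT h3 x z t).const_mul c3)).add ((hasDerivAt_DT h4 x z t).const_mul c4)

lemma derivX_c4 {c1 c2 c3 c4 : ℝ} {f1 f2 f3 f4 : ℝ → ℝ → ℝ → ℝ}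
    (h1 : Smooth f1) (h2 : Smooth f2) (h3 : Smooth f3) (h4 : Smooth f4)
    (H : ∀ x t : ℝ, ∀ z ∈ Set.Icc (0:ℝ) 1,
      c1 * f1 x z t + c2 * f2 x z t + c3 * f3 x z t + c4 * f4 x z t = 0) :
    ∀ x t : ℝ, ∀ z ∈ Set.Icc (0:ℝ) 1,
      c1 * Dx f1 x z t + c2 * Dx f2 x z t + c3 * Dx f3 x z t + c4 * Dx f4 x z t = 0 := by
  intro x t z hz
  have K := hasDerivAt_combX h1 h2 h3 h4 c1 c2 c3 c4 x z t
  have e : (fun x' => c1 * f1 x' z t + c2 * f2 x' z t + c3 * f3 x' z t + c4 * f4 x' z t)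
      = fun _ : ℝ => (0:ℝ) := funext fun x' => H x' t z hz
  rw [e] at K
  exact K.unique (hasDerivAt_const x 0)

lemma derivT_c4 {c1 c2 c3 c4 : ℝ} {f1 f2 f3 f4 : ℝ → ℝ → ℝ → ℝ}
    (h1 : Smooth f1) (h2 : Smooth f2) (h3 : Smooth f3) (h4 : Smooth f4)
    (H : ∀ x t : ℝ, ∀ z ∈ Set.Icc (0:ℝ) 1,
      c1 * f1 x z t + c2 * f2 x z t + c3 * f3 x z t + c4 * f4 x z t = 0) :
    ∀ x t : ℝ, ∀ z ∈ Set.Icc (0:ℝ) 1,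
      c1 * Dt f1 x z t + c2 * Dt f2 x z t + c3 * Dt f3 x z t + c4 * Dt f4 x z t = 0 := by
  intro x t z hz
  have K := hasDerivAt_combT h1 h2 h3 h4 c1 c2 c3 c4 x z t
  have e : (fun t' => c1 * f1 x z t' + c2 * f2 x z t' + c3 * f3 x z t' + c4 * f4 x z t')
      = fun _ : ℝ => (0:ℝ) := funext fun t' => H x t' z hz
  rw [e] at K
  exact K.unique (hasDerivAt_const t 0)

lemma derivZ_c4 {c1 c2 c3 c4 : ℝ} {f1 f2 f3 f4 : ℝ → ℝ → ℝ → ℝ}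
    (h1 : Smooth f1) (h2 : Smooth f2) (h3 : Smooth f3) (h4 : Smooth f4)
    (H : ∀ x t : ℝ, ∀ z ∈ Set.Icc (0:ℝ) 1,
      c1 * f1 x z t + c2 * f2 x z t + c3 * f3 x z t + c4 * f4 x z t = 0) :
    ∀ x t : ℝ, ∀ z ∈ Set.Icc (0:ℝ) 1,
      c1 * Dz f1 x z t + c2 * Dz f2 x z t + c3 * Dz f3 x z t + c4 * Dz f4 x z t = 0 := by
  intro x t
  have hIoo : ∀ z ∈ Set.Ioo (0:ℝ) 1,
      c1 * Dz f1 x z t + c2 * Dz f2 x z t + c3 * Dz f3 x z t + c4 * Dz f4 x z t = 0 := by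
    intro z hz
    have K := hasDerivAt_combZ h1 h2 h3 h4 c1 c2 c3 c4 x z t
    have e : (fun z' => c1 * f1 x z' t + c2 * f2 x z' t + c3 * f3 x z' t + c4 * f4 x z' t)
        =ᶠ[nhds z] fun _ : ℝ => (0:ℝ) := by
      filter_upwards [Ioo_mem_nhds hz.1 hz.2] with z' hz'
      exact H x t z' (Set.Ioo_subset_Icc_self hz')
    have K' := K.congr_of_eventuallyEq e.symm
    exact K'.unique (hasDerivAt_const z 0)
  have hcont : Continuous (fun z =>
      c1 * Dz f1 x z t + c2 * Dz f2 x z t + c3 * Dz f3 x z t + c4 * Dz f4 x z t) :=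
    (((continuous_const.mul (contZ h1.dz x t)).add
      (continuous_const.mul (contZ h2.dz x t))).add
      (continuous_const.mul (contZ h3.dz x t))).add
      (continuous_const.mul (contZ h4.dz x t))
  have hclosed : IsClosed {z : ℝ |
      c1 * Dz f1 x z t + c2 * Dz f2 x z t + c3 * Dz f3 x z t + c4 * Dz f4 x z t = 0} :=
    isClosed_eq hcont continuous_const
  intro z hz
  have hsub : Set.Icc (0:ℝ) 1 ⊆ {z : ℝ |
      c1 * Dz f1 x z t + c2 * Dz f2 x z t + c3 * Dz f3 x z t + c4 * Dz f4 x z t = 0} := by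
    rw [← closure_Ioo (zero_ne_one)]
    exact closure_minimal hIoo hclosed
  exact hsub hz

lemma derivX_fix {z₀ : ℝ} {c1 c2 c3 c4 : ℝ} {f1 f2 f3 f4 : ℝ → ℝ → ℝ → ℝ}
    (h1 : Smooth f1) (h2 : Smooth f2) (h3 : Smooth f3) (h4 : Smooth f4)
    (H : ∀ x t : ℝ, c1 * f1 x z₀ t + c2 * f2 x z₀ t + c3 * f3 x z₀ t + c4 * f4 x z₀ t = 0) :
    ∀ x t : ℝ, c1 * Dx f1 x z₀ t + c2 * Dx f2 x z₀ t + c3 * Dx f3 x z₀ t + c4 * Dx f4 x z₀ t = 0 := by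
  intro x t
  have K := hasDerivAt_combX h1 h2 h3 h4 c1 c2 c3 c4 x z₀ t
  have e : (fun x' => c1 * f1 x' z₀ t + c2 * f2 x' z₀ t + c3 * f3 x' z₀ t + c4 * f4 x' z₀ t)
      = fun _ : ℝ => (0:ℝ) := funext fun x' => H x' t
  rw [e] at K
  exact K.unique (hasDerivAt_const x 0)

lemma Dz_c4fun {c1 c2 c3 c4 : ℝ} {f1 f2 f3 f4 : ℝ → ℝ → ℝ → ℝ}
    (h1 : Smooth f1) (h2 : Smooth f2) (h3 : Smooth f3) (h4 : Smooth f4) :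
    Dz (fun x z t => c1 * f1 x z t + c2 * f2 x z t + c3 * f3 x z t + c4 * f4 x z t)
      = fun x z t => c1 * Dz f1 x z t + c2 * Dz f2 x z t + c3 * Dz f3 x z t + c4 * Dz f4 x z t := by
  funext x z t
  exact (hasDerivAt_combZ h1 h2 h3 h4 c1 c2 c3 c4 x z t).deriv

lemma Dx_c4fun {c1 c2 c3 c4 : ℝ} {f1 f2 f3 f4 : ℝ → ℝ → ℝ → ℝ}
    (h1 : Smooth f1) (h2 : Smooth f2) (h3 : Smooth f3) (h4 : Smooth f4) :
    Dx (fun x z t => c1 * f1 x z t + c2 * f2 x z t + c3 * f3 x z t + c4 * f4 x z t)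
      = fun x z t => c1 * Dx f1 x z t + c2 * Dx f2 x z t + c3 * Dx f3 x z t + c4 * Dx f4 x z t := by
  funext x z t
  exact (hasDerivAt_combX h1 h2 h3 h4 c1 c2 c3 c4 x z t).deriv

end NS

open NS

/-- reduction of the linearized dimensionless free-surface
Navier–Stokes system (2.6) in the channel ℝ×[0,1] to the fourth-order scalar
equation (2.7) for w together with the boundary conditions (2.9). -/
theorem linearized_reduction (β Re : ℝ) (hβ : 0 < β) (hRe : 0 < Re)
    (u w p : ℝ → ℝ → ℝ → ℝ) (η : ℝ → ℝ → ℝ)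
    (hu : ContDiff ℝ (⊤ : ℕ∞) (fun q : ℝ × ℝ × ℝ => u q.1 q.2.1 q.2.2))
    (hw : ContDiff ℝ (⊤ : ℕ∞) (fun q : ℝ × ℝ × ℝ => w q.1 q.2.1 q.2.2))
    (hp : ContDiff ℝ (⊤ : ℕ∞) (fun q : ℝ × ℝ × ℝ => p q.1 q.2.1 q.2.2))
    (hη : ContDiff ℝ (⊤ : ℕ∞) (fun q : ℝ × ℝ => η q.1 q.2))
    (h1 : ∀ x t : ℝ, ∀ z ∈ Set.Icc (0 : ℝ) 1,
      deriv (fun t' => u x z t') t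
        - Real.sqrt β / Re * deriv (fun x' => deriv (fun x'' => u x'' z t) x') x
        - 1 / (Re * Real.sqrt β) * deriv (fun z' => deriv (fun z'' => u x z'' t) z') z
        + deriv (fun x' => p x' z t) x = 0)
    (h2 : ∀ x t : ℝ, ∀ z ∈ Set.Icc (0 : ℝ) 1,
      deriv (fun t' => w x z t') t
        - Real.sqrt β / Re * deriv (fun x' => deriv (fun x'' => w x'' z t) x') x
        - 1 / (Re * Real.sqrt β) * deriv (fun z' => deriv (fun z'' => w x z'' t) z') z
        + deriv (fun z' => p x z' t) z = 0)
    (h3 : ∀ x t : ℝ, ∀ z ∈ Set.Icc (0 : ℝ) 1,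
      β * deriv (fun x' => u x' z t) x + deriv (fun z' => w x z' t) z = 0)
    (h4 : ∀ x t : ℝ,
      η x t - p x 1 t - 2 * Real.sqrt β / Re * deriv (fun x' => u x' 1 t) x = 0)
    (h5 : ∀ x t : ℝ,
      deriv (fun z' => u x z' t) 1 + deriv (fun x' => w x' 1 t) x = 0)
    (h6 : ∀ x t : ℝ, deriv (fun t' => η x t') t - w x 1 t / β = 0)
    (h7 : ∀ x t : ℝ, u x 0 t = 0 ∧ w x 0 t = 0) :
    (∀ x t : ℝ, ∀ z ∈ Set.Icc (0 : ℝ) 1, LaplOp β (ViscOp β Re w) x z t = 0) ∧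
    (∀ x t : ℝ,
      deriv (fun z' => w x z' t) 0 = 0 ∧
      w x 0 t = 0 ∧
      deriv (fun z' => deriv (fun z'' => w x z'' t) z') 1
        - β * deriv (fun x' => deriv (fun x'' => w x'' 1 t) x') x = 0 ∧
      deriv (fun x' => deriv (fun x'' => w x'' 1 t) x') x
        - deriv (fun z' => deriv (fun t' => deriv (fun t'' => w x z' t'') t') t) 1
        + 3 * Real.sqrt β / Re *
            deriv (fun x' => deriv (fun x'' =>
              deriv (fun z' => deriv (fun t' => w x'' z' t') t) 1) x') x
        + 1 / (Re * Real.sqrt β) *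
            deriv (fun z1 => deriv (fun z2 => deriv (fun z3 =>
              deriv (fun t' => w x z3 t') t) z2) z1) 1 = 0) := by
  have su : Smooth u := hu
  have sw : Smooth w := hw
  have sp : Smooth p := hp
  have hRe0 : Re ≠ 0 := ne_of_gt hRe
  have hβ0 : β ≠ 0 := ne_of_gt hβ
  have hs0 : Real.sqrt β ≠ 0 := ne_of_gt (Real.sqrt_pos.mpr hβ)
  have hss : Real.sqrt β * Real.sqrt β = β := Real.mul_self_sqrt hβ.le
  have mem1 : (1:ℝ) ∈ Set.Icc (0:ℝ) 1 := ⟨zero_le_one, le_refl 1⟩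
  have mem0 : (0:ℝ) ∈ Set.Icc (0:ℝ) 1 := ⟨le_refl 0, zero_le_one⟩
  -- canonical, denominator-free forms of the equations
  have C1 : ∀ x t : ℝ, ∀ z ∈ Set.Icc (0:ℝ) 1,
      (Re * Real.sqrt β) * Dt u x z t + (-β) * Dx (Dx u) x z t
        + (-1) * Dz (Dz u) x z t + (Re * Real.sqrt β) * Dx p x z t = 0 := by
    intro x t z hz
    have H : Dt u x z t - Real.sqrt β / Re * Dx (Dx u) x z t
        - 1 / (Re * Real.sqrt β) * Dz (Dz u) x z t + Dx p x z t = 0 := h1 x t z hz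
    have hss' := hss
    have hs0' := hs0
    generalize hg : Real.sqrt β = S at H hss' hs0' ⊢
    linear_combination (norm := (field_simp; ring1)) (Re * S) * H
      + Dx (Dx u) x z t * hss'
  have C2 : ∀ x t : ℝ, ∀ z ∈ Set.Icc (0:ℝ) 1,
      (Re * Real.sqrt β) * Dt w x z t + (-β) * Dx (Dx w) x z t
        + (-1) * Dz (Dz w) x z t + (Re * Real.sqrt β) * Dz p x z t = 0 := by
    intro x t z hz
    have H : Dt w x z t - Real.sqrt β / Re * Dx (Dx w) x z t
        - 1 / (Re * Real.sqrt β) * Dz (Dz w) x z t + Dz p x z t = 0 := h2 x t z hz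
    have hss' := hss
    have hs0' := hs0
    generalize hg : Real.sqrt β = S at H hss' hs0' ⊢
    linear_combination (norm := (field_simp; ring1)) (Re * S) * H
      + Dx (Dx w) x z t * hss'
  have C3 : ∀ x t : ℝ, ∀ z ∈ Set.Icc (0:ℝ) 1,
      β * Dx u x z t + 1 * Dz w x z t + 0 * w x z t + 0 * w x z t = 0 := by
    intro x t z hz
    have H : β * Dx u x z t + Dz w x z t = 0 := h3 x t z hz
    linear_combination H
  -- derived chains
  have EA1 := derivX_c4 su.dt su.dx.dx su.dz.dz sp.dx C1
  have EA := derivZ_c4 su.dt.dx su.dx.dx.dx su.dz.dz.dx sp.dx.dx EA1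
  have EB1 := derivX_c4 sw.dt sw.dx.dx sw.dz.dz sp.dz C2
  have EB := derivX_c4 sw.dt.dx sw.dx.dx.dx sw.dz.dz.dx sp.dz.dx EB1
  have EC := derivZ_c4 su.dx sw.dz sw sw C3
  have ECt := derivT_c4 su.dx.dz sw.dz.dz sw.dz sw.dz EC
  have ECx := derivX_c4 su.dx.dz sw.dz.dz sw.dz sw.dz EC
  have ECxx := derivX_c4 su.dx.dz.dx sw.dz.dz.dx sw.dz.dx sw.dz.dx ECx
  have ECz := derivZ_c4 su.dx.dz sw.dz.dz sw.dz sw.dz EC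
  have ECzz := derivZ_c4 su.dx.dz.dz sw.dz.dz.dz sw.dz.dz sw.dz.dz ECz
  have ECzt := derivT_c4 su.dx.dz.dz sw.dz.dz.dz sw.dz.dz sw.dz.dz ECz
  have ET3 := derivT_c4 su.dx sw.dz sw sw C3
  have ETtt := derivT_c4 su.dx.dt sw.dz.dt sw.dt sw.dt ET3
  have ET3x := derivX_c4 su.dx.dt sw.dz.dt sw.dt sw.dt ET3
  have ET3xx := derivX_c4 su.dx.dt.dx sw.dz.dt.dx sw.dt.dx sw.dt.dx ET3x
  have EP1 := derivT_c4 su.dt su.dx.dx su.dz.dz sp.dx C1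
  have EP := derivX_c4 su.dt.dt su.dx.dx.dt su.dz.dz.dt sp.dx.dt EP1
  -- the eta chain
  have hE0 : ∀ x t : ℝ, deriv (fun t' => η x t') t
      = Dt p x 1 t + 2 * Real.sqrt β / Re * Dt (Dx u) x 1 t := by
    intro x t
    have hηd : DifferentiableAt ℝ (fun t' => η x t') t := by
      have hcomp : DifferentiableAt ℝ
          ((fun q : ℝ × ℝ => η q.1 q.2) ∘ (fun t' : ℝ => (x, t'))) t :=
        DifferentiableAt.comp t (hη.differentiable (by simp) (x, t))
          ((differentiableAt_const x).prodMk differentiableAt_id)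
      exact hcomp
    have K : HasDerivAt (fun t' => η x t' - p x 1 t' - 2 * Real.sqrt β / Re * Dx u x 1 t')
        (deriv (fun t' => η x t') t - Dt p x 1 t - 2 * Real.sqrt β / Re * Dt (Dx u) x 1 t) t :=
      (hηd.hasDerivAt.sub (hasDerivAt_DT sp x 1 t)).sub
        ((hasDerivAt_DT su.dx x 1 t).const_mul _)
    have e : (fun t' => η x t' - p x 1 t' - 2 * Real.sqrt β / Re * Dx u x 1 t')
        = fun _ : ℝ => (0:ℝ) := funext fun t' => h4 x t'
    rw [e] at K
    have h0 := K.unique (hasDerivAt_const t 0)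
    linarith
  have Ci : ∀ x t : ℝ, Re * w x 1 t + (-(β * Re)) * Dt p x 1 t
      + (-(2 * Real.sqrt β * β)) * Dt (Dx u) x 1 t + 0 * w x 1 t = 0 := by
    intro x t
    have h6' : deriv (fun t' => η x t') t - w x 1 t / β = 0 := h6 x t
    rw [hE0 x t] at h6'
    have hss' := hss
    have hs0' := hs0
    generalize hg : Real.sqrt β = S at h6' hss' hs0' ⊢
    linear_combination (norm := (field_simp; ring1)) (-(β * Re)) * h6'
  have Ci1 := derivX_fix sw sp.dt su.dx.dt sw Ci
  have Ci2 := derivX_fix sw.dx sp.dt.dx su.dx.dt.dx sw.dx Ci1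
  have C5 : ∀ x t : ℝ, 1 * Dz u x 1 t + 1 * Dx w x 1 t + 0 * w x 1 t + 0 * w x 1 t = 0 := by
    intro x t
    have H : Dz u x 1 t + Dx w x 1 t = 0 := h5 x t
    linear_combination H
  have H5x := derivX_fix su.dz sw.dx sw sw C5
  constructor
  · -- the fourth order equation
    intro x t z hz
    have hV : ViscOp β Re w = (fun x z t => 1 * Dz (Dz w) x z t + β * Dx (Dx w) x z t
        + (-(Re * Real.sqrt β)) * Dt w x z t + 0 * w x z t) := by
      funext a b c
      show Dz (Dz w) a b c + β * Dx (Dx w) a b c - Re * Real.sqrt β * Dt w a b c = _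
      ring
    have e1 : LaplOp β (ViscOp β Re w) x z t
        = Dz (Dz (ViscOp β Re w)) x z t + β * Dx (Dx (ViscOp β Re w)) x z t := rfl
    rw [e1, hV, Dz_c4fun sw.dz.dz sw.dx.dx sw.dt sw,
      Dz_c4fun sw.dz.dz.dz sw.dx.dx.dz sw.dt.dz sw.dz,
      Dx_c4fun sw.dz.dz sw.dx.dx sw.dt sw,
      Dx_c4fun sw.dz.dz.dx sw.dx.dx.dx sw.dt.dx sw.dx]
    beta_reduce
    have hgc : Dz (Dz (Dx (Dx w))) = Dx (Dx (Dz (Dz w))) := by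
      rw [comm_zx sw.dx, comm_zx sw.dx.dz, comm_zx sw, comm_zx sw.dz]
    rw [hgc]
    have hA := EA x t z hz
    rw [← comm_tx su, ← comm_tz su.dx, comm_zx su.dx.dx, comm_zx su.dx,
      ← comm_zx su.dz, ← comm_zx su, comm_zx sp.dx, comm_zx sp] at hA
    have hB := EB x t z hz
    have hCt := ECt x t z hz
    rw [comm_tz sw.dz, comm_tz sw] at hCt
    have hCxx := ECxx x t z hz
    have hCzz := ECzz x t z hz
    linear_combination β * hA + (-β) * hB + (-(Re * Real.sqrt β)) * hCt + β * hCxx + hCzz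
  · intro x t
    refine ⟨?_, (h7 x t).2, ?_, ?_⟩
    · -- w_z = 0 at z = 0
      show Dz w x 0 t = 0
      have hC : β * Dx u x 0 t + Dz w x 0 t = 0 := h3 x t 0 mem0
      have hux : Dx u x 0 t = 0 := by
        have e : (fun x' => u x' 0 t) = fun _ => (0:ℝ) := funext fun x' => (h7 x' t).1
        show deriv (fun x' => u x' 0 t) x = 0
        rw [e]
        exact deriv_const x 0
      rw [hux] at hC
      linarith
    · -- w_zz - β w_xx = 0 at z = 1
      show Dz (Dz w) x 1 t - β * Dx (Dx w) x 1 t = 0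
      have hEC := EC x t 1 mem1
      rw [comm_zx su] at hEC
      have hH5 := H5x x t
      linear_combination hEC - β * hH5
    · -- dynamic boundary condition
      show Dx (Dx w) x 1 t - Dz (Dt (Dt w)) x 1 t
          + 3 * Real.sqrt β / Re * Dx (Dx (Dz (Dt w))) x 1 t
          + 1 / (Re * Real.sqrt β) * Dz (Dz (Dz (Dt w))) x 1 t = 0
      have hP := EP x t 1 mem1
      rw [← comm_tx su.dt, ← comm_tx su, comm_tx su.dx, ← comm_tx su.dz.dz,
        ← comm_zx su.dz, ← comm_zx su] at hP
      have hTtt := ETtt x t 1 mem1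
      have hT3xx := ET3xx x t 1 mem1
      have hCzt := ECzt x t 1 mem1
      have hCi2 := Ci2 x t
      rw [← comm_tx sp] at hCi2
      rw [← comm_tz sw.dt, ← comm_tz sw, ← comm_tz sw.dz, ← comm_tz sw.dz.dz]
      have hss' := hss
      have hs0' := hs0
      generalize hg : Real.sqrt β = S at hP hTtt hT3xx hCzt hCi2 hss' hs0' ⊢
      linear_combination (norm := (field_simp; ring1))
        (β / (Re * S)) * hP - hTtt + (3 * S / Re) * hT3xx
        + (1 / (Re * S)) * hCzt + (1 / Re) * hCi2
        - (β / (Re * S)) * Dx (Dx (Dt (Dx u))) x 1 t * hss'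
end

section
/- Let k > 0, β > 0, Re > 0 be real, and let c, μ, C₁, C₂, C₃, C₄ be complex numbers with μ² = β·k² − i·Re·√β·k·c. Define A(z) = C₁·cosh(√β·k·(z−1)) + C₂·sinh(√β·k·(z−1)) + C₃·cosh(μ·(z−1)) + C₄·sinh(μ·(z−1)) and w(x,z,t) = A(z)·exp(i·k·(x − c·t)). Then w satisfies the four boundary conditions — ∂_z w(x,0,t) = 0, w(x,0,t) = 0, ∂_z²w(x,1,t) − β∂_x²w(x,1,t) = 0, and ∂_x²w(x,1,t) − ∂_z∂_t²w(x,1,t) + (3√β/Re)∂_x²∂_z∂_t w(x,1,t) + (1/(Re√β))∂_z³∂_t w(x,1,t) = 0 for all x, t ∈ ℝ — if and only if the vector (C₁,C₂,C₃,C₄) lies in the kernel of the 4×4 complex matrix M with rows: row 1 = (√β·k·sinh(√β k), −√β·k·cosh(√β k), μ·sinh μ, −μ·cosh μ); row 2 = (cosh(√β k), −sinh(√β k), cosh μ, −sinh μ); row 3 = (2k²β, 0, μ² + βk², 0); row 4 = (−k², √β·k³·c² + 2iβk⁴c/Re, −k², 2μ·√β·i·k³·c/Re). -/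
open Real Complex

/-!
On the normal mode `A(z) e^{ik(x - ct)}` the derivatives act as `∂ₓ ↦ ik`, `∂ₜ ↦ -ikc` and
`∂_z ↦` differentiation of the profile `A`. Since the exponential never vanishes, each boundary
condition becomes a linear condition on `A` and its `z`-derivatives at `z = 0` or `z = 1`. The
derivatives of `P cosh(m(z-1)) + Q sinh(m(z-1))` are again of this form, with the values `P` at
`z = 1` and `P cosh m - Q sinh m` at `z = 0`, so the four conditions are the four rows of `M`
applied to `(C₁, C₂, C₃, C₄)`.
-/

noncomputable def planeWave (A : ℝ → ℂ) (k c : ℂ) (x z t : ℝ) : ℂ :=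
  A z * cexp (I * k * (x - c * t))

theorem deriv_planeWave_x (A : ℝ → ℂ) (k c : ℂ) (x z t : ℝ) :
    deriv (fun x' => planeWave A k c x' z t) x = I * k * planeWave A k c x z t := by
  have h : HasDerivAt (fun x' : ℝ => I * k * (x' - c * t)) (I * k) x := by
    simpa using (((hasDerivAt_id (x : ℂ)).sub_const (c * t)).const_mul (I * k)).comp_ofReal
  simp only [planeWave, (h.cexp.const_mul (A z)).deriv]
  ring

theorem deriv_planeWave_t (A : ℝ → ℂ) (k c : ℂ) (x z t : ℝ) :
    deriv (fun t' => planeWave A k c x z t') t = -(I * k * c) * planeWave A k c x z t := by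
  have h : HasDerivAt (fun t' : ℝ => I * k * (x - c * t')) (-(I * k * c)) t := by
    simpa using
      ((((hasDerivAt_id (t : ℂ)).const_mul c).const_sub (x : ℂ)).const_mul (I * k)).comp_ofReal
  simp only [planeWave, (h.cexp.const_mul (A z)).deriv]
  ring

theorem deriv_planeWave_z {A A' : ℝ → ℂ} (hA : ∀ z, HasDerivAt A (A' z) z) (k c : ℂ)
    (x z t : ℝ) :
    deriv (fun z' => planeWave A k c x z' t) z = planeWave A' k c x z t :=
  ((hA z).mul_const _).deriv

noncomputable def coshSinh (a P Q : ℂ) (z : ℝ) : ℂ :=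
  P * Complex.cosh (a * (z - 1)) + Q * Complex.sinh (a * (z - 1))

theorem hasDerivAt_coshSinh (a P Q : ℂ) (z : ℝ) :
    HasDerivAt (coshSinh a P Q) (coshSinh a (a * Q) (a * P) z) z := by
  have h : HasDerivAt (fun w : ℂ => a * (w - 1)) a z := by
    simpa using ((hasDerivAt_id (z : ℂ)).sub_const 1).const_mul a
  exact ((h.ccosh.const_mul P).add (h.csinh.const_mul Q)).comp_ofReal.congr_deriv
    (by rw [coshSinh]; ring)

theorem hasDerivAt_coshSinh_add (a b P Q R S : ℂ) (z : ℝ) :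
    HasDerivAt (fun z => coshSinh a P Q z + coshSinh b R S z)
      (coshSinh a (a * Q) (a * P) z + coshSinh b (b * S) (b * R) z) z :=
  (hasDerivAt_coshSinh a P Q z).add (hasDerivAt_coshSinh b R S z)

@[simp] theorem coshSinh_one (a P Q : ℂ) : coshSinh a P Q 1 = P := by
  simp [coshSinh]

@[simp] theorem coshSinh_zero (a P Q : ℂ) :
    coshSinh a P Q 0 = P * Complex.cosh a - Q * Complex.sinh a := by
  simp [coshSinh, sub_eq_add_neg]

/-- The conditions (2.9): at the bottom `z = 0` and at the free surface `z = 1`. -/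
def BoundaryConditions (β Re : ℝ) (w : ℝ → ℝ → ℝ → ℂ) : Prop :=
  ∀ x t : ℝ,
    deriv (fun z' => w x z' t) 0 = 0 ∧
    w x 0 t = 0 ∧
    deriv (fun z' => deriv (fun z'' => w x z'' t) z') 1
      - (β : ℂ) * deriv (fun x' => deriv (fun x'' => w x'' 1 t) x') x = 0 ∧
    deriv (fun x' => deriv (fun x'' => w x'' 1 t) x') x
      - deriv (fun z' => deriv (fun t' => deriv (fun t'' => w x z' t'') t') t) 1
      + ((3 * Real.sqrt β / Re : ℝ) : ℂ) *
          deriv (fun x' => deriv (fun x'' =>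
            deriv (fun z' => deriv (fun t' => w x'' z' t') t) 1) x') x
      + ((1 / (Re * Real.sqrt β) : ℝ) : ℂ) *
          deriv (fun z1 => deriv (fun z2 => deriv (fun z3 =>
            deriv (fun t' => w x z3 t') t) z2) z1) 1 = 0

theorem eq_zero_iff_of_eq_mul {M₀ : Type*} [MulZeroClass M₀] [NoZeroDivisors M₀] {a b c : M₀}
    (hc : c ≠ 0) (h : a = b * c) : a = 0 ↔ b = 0 := by
  rw [h, mul_eq_zero_iff_right hc]

theorem boundaryConditions_planeWave_iff {A A₁ A₂ A₃ : ℝ → ℂ}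
    (hA : ∀ z, HasDerivAt A (A₁ z) z) (hA₁ : ∀ z, HasDerivAt A₁ (A₂ z) z)
    (hA₂ : ∀ z, HasDerivAt A₂ (A₃ z) z) (β Re : ℝ) (k c : ℂ) :
    BoundaryConditions β Re (planeWave A k c) ↔
      A₁ 0 = 0 ∧ A 0 = 0 ∧ A₂ 1 - β * (I * k) ^ 2 * A 1 = 0 ∧
      (I * k) ^ 2 * A 1 - (I * k * c) ^ 2 * A₁ 1
        - ((3 * Real.sqrt β / Re : ℝ) : ℂ) * (I * k) ^ 2 * (I * k * c) * A₁ 1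
        - ((1 / (Re * Real.sqrt β) : ℝ) : ℂ) * (I * k * c) * A₃ 1 = 0 := by
  refine (forall₂_congr fun x t => ?_).trans
    ((forall_congr' fun _ => forall_const ℝ).trans (forall_const ℝ))
  simp only [deriv_planeWave_x, deriv_planeWave_t, deriv_planeWave_z hA, deriv_planeWave_z hA₁,
    deriv_planeWave_z hA₂, deriv_const_mul_field']
  simp only [planeWave]
  have hE := Complex.exp_ne_zero (I * k * (x - c * t))
  refine and_congr ?_ (and_congr ?_ (and_congr ?_ ?_)) <;> exact eq_zero_iff_of_eq_mul hE (by ring)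

/-- With `s = √β`; the relation for `μ²` is what reduces the `μ³` term. -/
theorem fourth_condition_coshSinh_eq_fourth_row (s Re k c μ C₁ C₂ C₃ C₄ : ℂ) (hs : s ≠ 0)
    (hRe : Re ≠ 0) (hμ : μ ^ 2 = s ^ 2 * k ^ 2 - I * Re * s * k * c) :
    (I * k) ^ 2 * (C₁ + C₃) - (I * k * c) ^ 2 * (s * k * C₂ + μ * C₄)
      - 3 * s / Re * (I * k) ^ 2 * (I * k * c) * (s * k * C₂ + μ * C₄)
      - 1 / (Re * s) * (I * k * c) * (s * k * (s * k * (s * k * C₂)) + μ * (μ * (μ * C₄))) =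
    C₁ * -k ^ 2 + (C₂ * (s * k ^ 3 * c ^ 2 + 2 * I * s ^ 2 * k ^ 4 * c / Re)
      + (C₃ * -k ^ 2 + C₄ * (2 * μ * s * I * k ^ 3 * c / Re))) := by
  simp only [mul_pow, I_sq]
  field_simp
  linear_combination (-(I * k * c * μ * C₄)) * hμ + k ^ 2 * s * c ^ 2 * μ * C₄ * Re * I_sq

theorem boundary_conditions_iff_kernel_general (k β Re : ℝ) (hβ : 0 < β) (hRe : 0 < Re)
    (c μ C₁ C₂ C₃ C₄ : ℂ)
    (hμ : μ ^ 2 = (β : ℂ) * (k : ℂ) ^ 2 - Complex.I * (Re : ℂ) * ((Real.sqrt β : ℝ) : ℂ) * (k : ℂ) * c)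
    (A : ℝ → ℂ)
    (hA : ∀ z : ℝ, A z =
      C₁ * Complex.cosh (((Real.sqrt β * k : ℝ) : ℂ) * ((z : ℂ) - 1)) +
      C₂ * Complex.sinh (((Real.sqrt β * k : ℝ) : ℂ) * ((z : ℂ) - 1)) +
      C₃ * Complex.cosh (μ * ((z : ℂ) - 1)) +
      C₄ * Complex.sinh (μ * ((z : ℂ) - 1)))
    (w : ℝ → ℝ → ℝ → ℂ)
    (hw : ∀ x z t : ℝ, w x z t = A z * Complex.exp (Complex.I * (k : ℂ) * ((x : ℂ) - c * (t : ℂ))))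
    (M : Matrix (Fin 4) (Fin 4) ℂ)
    (hM : M = !![
      ((Real.sqrt β * k : ℝ) : ℂ) * Complex.sinh ((Real.sqrt β * k : ℝ) : ℂ),
        -(((Real.sqrt β * k : ℝ) : ℂ) * Complex.cosh ((Real.sqrt β * k : ℝ) : ℂ)),
        μ * Complex.sinh μ, -(μ * Complex.cosh μ);
      Complex.cosh ((Real.sqrt β * k : ℝ) : ℂ), -Complex.sinh ((Real.sqrt β * k : ℝ) : ℂ),
        Complex.cosh μ, -Complex.sinh μ;
      2 * (k : ℂ) ^ 2 * (β : ℂ), 0, μ ^ 2 + (β : ℂ) * (k : ℂ) ^ 2, 0;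
      -((k : ℂ) ^ 2),
        ((Real.sqrt β : ℝ) : ℂ) * (k : ℂ) ^ 3 * c ^ 2 +
          2 * Complex.I * (β : ℂ) * (k : ℂ) ^ 4 * c / (Re : ℂ),
        -((k : ℂ) ^ 2),
        2 * μ * ((Real.sqrt β : ℝ) : ℂ) * Complex.I * (k : ℂ) ^ 3 * c / (Re : ℂ)]) :
    ((∀ x t : ℝ,
        deriv (fun z' => w x z' t) 0 = 0 ∧
        w x 0 t = 0 ∧
        deriv (fun z' => deriv (fun z'' => w x z'' t) z') 1
          - (β : ℂ) * deriv (fun x' => deriv (fun x'' => w x'' 1 t) x') x = 0 ∧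
        deriv (fun x' => deriv (fun x'' => w x'' 1 t) x') x
          - deriv (fun z' => deriv (fun t' => deriv (fun t'' => w x z' t'') t') t) 1
          + ((3 * Real.sqrt β / Re : ℝ) : ℂ) *
              deriv (fun x' => deriv (fun x'' =>
                deriv (fun z' => deriv (fun t' => w x'' z' t') t) 1) x') x
          + ((1 / (Re * Real.sqrt β) : ℝ) : ℂ) *
              deriv (fun z1 => deriv (fun z2 => deriv (fun z3 =>
                deriv (fun t' => w x z3 t') t) z2) z1) 1 = 0)
      ↔ M.mulVec ![C₁, C₂, C₃, C₄] = 0) := by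
  obtain rfl : A = fun z => coshSinh ((√β * k : ℝ) : ℂ) C₁ C₂ z + coshSinh μ C₃ C₄ z :=
    funext fun z => (hA z).trans (add_assoc _ _ _)
  obtain rfl : w = planeWave _ k c := funext₃ hw
  change BoundaryConditions β Re _ ↔ _
  rw [boundaryConditions_planeWave_iff (hasDerivAt_coshSinh_add _ _ _ _ _ _)
    (hasDerivAt_coshSinh_add _ _ _ _ _ _) (hasDerivAt_coshSinh_add _ _ _ _ _ _), hM]
  simp only [coshSinh_zero, coshSinh_one, Matrix.mulVec_cons, Matrix.mulVec_empty, add_zero,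
    funext_iff, Pi.add_apply, Pi.smul_apply, Function.comp_apply, smul_eq_mul, Pi.zero_apply,
    Fin.forall_fin_succ, Matrix.cons_val_zero, Matrix.head_cons, Matrix.tail_cons,
    Matrix.cons_val_succ, Matrix.cons_val_fin_one, forall_const]
  have hs : ((√β : ℝ) : ℂ) ^ 2 = β := by rw [← ofReal_pow, sq_sqrt hβ.le]
  refine and_congr ?_ (and_congr ?_ (and_congr ?_ ?_))
  · rw [← neg_eq_zero]
    exact Eq.congr_left (by ring)
  · exact Eq.congr_left (by ring)
  · refine Eq.congr_left ?_
    push_cast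
    linear_combination C₁ * k ^ 2 * hs - k ^ 2 * β * (C₁ + C₃) * I_sq
  · push_cast
    rw [← hs] at hμ ⊢
    exact Eq.congr_left (fourth_condition_coshSinh_eq_fourth_row _ _ _ _ _ _ _ _ _
      (ofReal_ne_zero.mpr (Real.sqrt_ne_zero'.mpr hβ)) (ofReal_ne_zero.mpr hRe.ne') hμ)

/-- the plane-wave ansatz satisfies the four boundary conditions (2.9)
iff the coefficient vector lies in the kernel of the matrix (2.9bis). -/
theorem boundary_conditions_iff_kernel (k β Re : ℝ) (hk : 0 < k) (hβ : 0 < β) (hRe : 0 < Re)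
    (c μ C₁ C₂ C₃ C₄ : ℂ)
    (hμ : μ ^ 2 = (β : ℂ) * (k : ℂ) ^ 2 - Complex.I * (Re : ℂ) * ((Real.sqrt β : ℝ) : ℂ) * (k : ℂ) * c)
    (A : ℝ → ℂ)
    (hA : ∀ z : ℝ, A z =
      C₁ * Complex.cosh (((Real.sqrt β * k : ℝ) : ℂ) * ((z : ℂ) - 1)) +
      C₂ * Complex.sinh (((Real.sqrt β * k : ℝ) : ℂ) * ((z : ℂ) - 1)) +
      C₃ * Complex.cosh (μ * ((z : ℂ) - 1)) +
      C₄ * Complex.sinh (μ * ((z : ℂ) - 1)))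
    (w : ℝ → ℝ → ℝ → ℂ)
    (hw : ∀ x z t : ℝ, w x z t = A z * Complex.exp (Complex.I * (k : ℂ) * ((x : ℂ) - c * (t : ℂ))))
    (M : Matrix (Fin 4) (Fin 4) ℂ)
    (hM : M = !![
      ((Real.sqrt β * k : ℝ) : ℂ) * Complex.sinh ((Real.sqrt β * k : ℝ) : ℂ),
        -(((Real.sqrt β * k : ℝ) : ℂ) * Complex.cosh ((Real.sqrt β * k : ℝ) : ℂ)),
        μ * Complex.sinh μ, -(μ * Complex.cosh μ);
      Complex.cosh ((Real.sqrt β * k : ℝ) : ℂ), -Complex.sinh ((Real.sqrt β * k : ℝ) : ℂ),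
        Complex.cosh μ, -Complex.sinh μ;
      2 * (k : ℂ) ^ 2 * (β : ℂ), 0, μ ^ 2 + (β : ℂ) * (k : ℂ) ^ 2, 0;
      -((k : ℂ) ^ 2),
        ((Real.sqrt β : ℝ) : ℂ) * (k : ℂ) ^ 3 * c ^ 2 +
          2 * Complex.I * (β : ℂ) * (k : ℂ) ^ 4 * c / (Re : ℂ),
        -((k : ℂ) ^ 2),
        2 * μ * ((Real.sqrt β : ℝ) : ℂ) * Complex.I * (k : ℂ) ^ 3 * c / (Re : ℂ)]) :
    ((∀ x t : ℝ,
        deriv (fun z' => w x z' t) 0 = 0 ∧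
        w x 0 t = 0 ∧
        deriv (fun z' => deriv (fun z'' => w x z'' t) z') 1
          - (β : ℂ) * deriv (fun x' => deriv (fun x'' => w x'' 1 t) x') x = 0 ∧
        deriv (fun x' => deriv (fun x'' => w x'' 1 t) x') x
          - deriv (fun z' => deriv (fun t' => deriv (fun t'' => w x z' t'') t') t) 1
          + ((3 * Real.sqrt β / Re : ℝ) : ℂ) *
              deriv (fun x' => deriv (fun x'' =>
                deriv (fun z' => deriv (fun t' => w x'' z' t') t) 1) x') x
          + ((1 / (Re * Real.sqrt β) : ℝ) : ℂ) *
              deriv (fun z1 => deriv (fun z2 => deriv (fun z3 =>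
                deriv (fun t' => w x z3 t') t) z2) z1) 1 = 0)
      ↔ M.mulVec ![C₁, C₂, C₃, C₄] = 0) :=
  boundary_conditions_iff_kernel_general k β Re hβ hRe c μ C₁ C₂ C₃ C₄ hμ A hA w hw M hM
end

section
/- Let a > 0 and t > 0, and let u : [0,t] → ℝ be continuously differentiable. Then for every γ > 0: ∂/∂γ [ ∫_0^t u(t−s)·(√a·γ/(2√π·s^{3/2}))·e^{−aγ²/(4s)} ds ] = −(√a/√π)·( u(0)·e^{−aγ²/(4t)}/√t + ∫_0^t u'(t−s)·e^{−aγ²/(4s)}/√s ds ). -/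
/-!
Write `h(c, s) = e^{-c/(4s)}/√s`. The boundary kernel is `-(1/√π) ∂ₓ` of the heat kernel
`e^{-x²/(4s)}/√s` at `x = √a γ`, so by the heat equation its `γ`-derivative equals
`-(√a/√π) ∂ₛ h(aγ², s)`. All kernels involved are bounded on `(0, t]` because `e^{-δ/s}` beats
every power of `1/s`, which justifies differentiating under the integral sign; an integration by
parts in `s` against `u (t - s)` then gives the formula, the boundary term at `s = 0` vanishing
since `h(c, s) → 0` as `s → 0⁺` for `c > 0`.
-/

open Real MeasureTheory intervalIntegral Set Filter Topology Nat Interval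

theorem exp_neg_div_le_factorial_mul_pow {δ s : ℝ} (hδ : 0 < δ) (hs : 0 < s) (n : ℕ) :
    exp (-(δ / s)) ≤ n ! * (s / δ) ^ n :=
  calc exp (-(δ / s)) = (exp (δ / s))⁻¹ := exp_neg _
    _ ≤ ((δ / s) ^ n / n !)⁻¹ :=
        inv_anti₀ (by positivity) (pow_div_factorial_le_exp _ (div_pos hδ hs).le n)
    _ = n ! * (s / δ) ^ n := by rw [inv_div, ← inv_div s δ, inv_pow, div_inv_eq_mul]

theorem exp_neg_div_div_pow_mul_sqrt_le {δ s t : ℝ} (hδ : 0 < δ) (hs : 0 < s) (hst : s ≤ t)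
    (k : ℕ) : exp (-(δ / s)) / (s ^ k * √s) ≤ (k + 1)! * √t / δ ^ (k + 1) := by
  have hsqrt : 0 < √s := sqrt_pos.2 hs
  calc exp (-(δ / s)) / (s ^ k * √s) ≤ (k + 1)! * (s / δ) ^ (k + 1) / (s ^ k * √s) := by
        gcongr; exact exp_neg_div_le_factorial_mul_pow hδ hs _
    _ = (k + 1)! * √s / δ ^ (k + 1) := by
        rw [div_pow, pow_succ]
        field_simp
        rw [sq_sqrt hs.le]
    _ ≤ (k + 1)! * √t / δ ^ (k + 1) := by gcongr

noncomputable def heatProfile (c s : ℝ) : ℝ := exp (-(c / (4 * s))) / √s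

noncomputable def heatProfileDeriv (c s : ℝ) : ℝ :=
  exp (-(c / (4 * s))) * (c / (4 * s ^ 2) - 1 / (2 * s)) / √s

noncomputable def boundaryKernel (a γ s : ℝ) : ℝ :=
  √a * γ / (2 * √π * s ^ ((3 : ℝ) / 2)) * exp (-(a * γ ^ 2 / (4 * s)))

-- `√0 = 0` and `x / 0 = 0` make this hold literally; it is also the limit at `0⁺` for `c > 0`.
@[simp]
theorem heatProfile_zero (c : ℝ) : heatProfile c 0 = 0 := by simp [heatProfile]

theorem hasDerivAt_heatProfile {s : ℝ} (c : ℝ) (hs : 0 < s) :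
    HasDerivAt (heatProfile c) (heatProfileDeriv c s) s := by
  have hsqrt : √s ≠ 0 := (sqrt_pos.2 hs).ne'
  have hexponent := ((hasDerivAt_const s c).div ((hasDerivAt_id s).const_mul 4)
    (by positivity)).neg
  refine (hexponent.exp.div (hasDerivAt_sqrt hs.ne') hsqrt).congr_deriv ?_
  simp only [heatProfileDeriv, id, Pi.neg_apply, Pi.div_apply]
  field_simp
  rw [sq_sqrt hs.le]
  ring

theorem hasDerivAt_boundaryKernel (a : ℝ) {s : ℝ} (hs : 0 < s) (x : ℝ) :
    HasDerivAt (fun x => boundaryKernel a x s)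
      (-(√a / √π) * heatProfileDeriv (a * x ^ 2) s) x := by
  have hs32 : s ^ ((3 : ℝ) / 2) = s * √s := by
    rw [sqrt_eq_rpow, ← rpow_one_add' hs.le (by norm_num)]; norm_num
  have hexponent := (((hasDerivAt_pow 2 x).const_mul a).div_const (4 * s)).neg
  refine (((hasDerivAt_id x).const_mul √a |>.div_const (2 * √π * s ^ ((3 : ℝ) / 2))).mul
    hexponent.exp).congr_deriv ?_
  simp only [heatProfileDeriv, id, hs32, Pi.neg_apply]
  have := sqrt_pos.2 hs
  have := sqrt_pos.2 pi_pos
  field_simp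
  ring

theorem abs_heatProfile_le {c s : ℝ} (hc : 0 < c) (hs : 0 ≤ s) :
    |heatProfile c s| ≤ 4 * √s / c := by
  rcases hs.eq_or_lt with rfl | hs
  · simp
  have h := exp_neg_div_div_pow_mul_sqrt_le (δ := c / 4) (by positivity) hs le_rfl 0
  rw [← div_mul_eq_div_div] at h
  rw [heatProfile, abs_of_pos (by positivity)]
  convert h using 1 <;> simp [field]

theorem continuousOn_heatProfile {c : ℝ} (hc : 0 < c) : ContinuousOn (heatProfile c) (Ici 0) := by
  intro s hs
  rcases (mem_Ici.1 hs).eq_or_lt with rfl | hs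
  · have hbound : Tendsto (fun s => 4 * √s / c) (𝓝[Ici 0] 0) (𝓝 0) :=
      ((continuous_sqrt.const_mul 4).div_const c).tendsto' 0 0 (by simp) |>.mono_left
        nhdsWithin_le_nhds
    rw [ContinuousWithinAt, heatProfile_zero]
    exact squeeze_zero_norm' (eventually_nhdsWithin_of_forall fun s hs => abs_heatProfile_le hc hs)
      hbound
  · exact (hasDerivAt_heatProfile c hs).continuousAt.continuousWithinAt

theorem exists_abs_heatProfileDeriv_le {c₀ : ℝ} (hc₀ : 0 < c₀) (c₁ t : ℝ) :
    ∃ C, ∀ c ∈ Icc c₀ c₁, ∀ s ∈ Ioc 0 t, |heatProfileDeriv c s| ≤ C := by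
  have hδ : 0 < c₀ / 4 := by positivity
  refine ⟨c₁ / 4 * ((2 + 1)! * √t / (c₀ / 4) ^ (2 + 1)) +
    1 / 2 * ((1 + 1)! * √t / (c₀ / 4) ^ (1 + 1)), ?_⟩
  rintro c ⟨hc₀c, hcc₁⟩ s ⟨hs, hst⟩
  have hc : 0 < c := hc₀.trans_le hc₀c
  have hc₁ : 0 ≤ c₁ := by linarith
  have hdecay : exp (-(c / (4 * s))) ≤ exp (-(c₀ / 4 / s)) := by
    rw [div_mul_eq_div_div]; gcongr
  have hsqrt := sqrt_pos.2 hs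
  have h₂ := exp_neg_div_div_pow_mul_sqrt_le hδ hs hst 2
  have h₁ := exp_neg_div_div_pow_mul_sqrt_le hδ hs hst 1
  calc |heatProfileDeriv c s|
      ≤ exp (-(c₀ / 4 / s)) * (c / (4 * s ^ 2) + 1 / (2 * s)) / √s := by
        rw [heatProfileDeriv, abs_div, abs_mul, abs_of_pos (exp_pos _), abs_of_pos hsqrt]
        gcongr
        exact (abs_sub _ _).trans (by rw [abs_of_pos (by positivity), abs_of_pos (by positivity)])
    _ = c / 4 * (exp (-(c₀ / 4 / s)) / (s ^ 2 * √s)) +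
          1 / 2 * (exp (-(c₀ / 4 / s)) / (s ^ 1 * √s)) := by
        field_simp
    _ ≤ _ := by gcongr

theorem exists_abs_boundaryKernel_le {a γ : ℝ} (ha : 0 < a) (hγ : γ ≠ 0) (t : ℝ) :
    ∃ C, ∀ s ∈ Ioc 0 t, |boundaryKernel a γ s| ≤ C := by
  have hδ : 0 < a * γ ^ 2 / 4 := by positivity
  refine ⟨√a * |γ| / (2 * √π) * ((1 + 1)! * √t / (a * γ ^ 2 / 4) ^ (1 + 1)),
    fun s ⟨hs, hst⟩ => ?_⟩
  have hs32 : s ^ ((3 : ℝ) / 2) = s ^ 1 * √s := by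
    rw [pow_one, sqrt_eq_rpow, ← rpow_one_add' hs.le (by norm_num)]; norm_num
  have := sqrt_pos.2 hs
  have := sqrt_pos.2 pi_pos
  calc |boundaryKernel a γ s|
      = √a * |γ| / (2 * √π) * (exp (-(a * γ ^ 2 / 4 / s)) / (s ^ 1 * √s)) := by
        rw [boundaryKernel, hs32, div_mul_eq_div_div (a * γ ^ 2) 4 s, abs_mul,
          abs_of_pos (exp_pos _), abs_div, abs_mul, abs_of_nonneg (sqrt_nonneg a),
          abs_of_pos (by positivity : (0 : ℝ) < 2 * √π * (s ^ 1 * √s))]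
        ring
    _ ≤ _ :=
        mul_le_mul_of_nonneg_left (exp_neg_div_div_pow_mul_sqrt_le hδ hs hst 1) (by positivity)

theorem intervalIntegrable_heatProfileDeriv {c t : ℝ} (hc : 0 < c) (ht : 0 ≤ t) :
    IntervalIntegrable (heatProfileDeriv c) volume 0 t := by
  obtain ⟨C, hC⟩ := exists_abs_heatProfileDeriv_le hc c t
  have hmeas : Measurable (heatProfileDeriv c) := by unfold heatProfileDeriv; fun_prop
  refine (intervalIntegrable_const (c := C)).mono_fun' hmeas.aestronglyMeasurable ?_
  rw [uIoc_of_le ht]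
  exact (ae_restrict_iff' measurableSet_Ioc).2 <|
    ae_of_all _ fun s hs => hC c ⟨le_rfl, le_rfl⟩ s hs

theorem hasDerivAt_integral_mul_boundaryKernel {f : ℝ → ℝ} {a t γ : ℝ} (ha : 0 < a)
    (ht : 0 ≤ t) (hγ : γ ≠ 0) (hf : IntervalIntegrable f volume 0 t) :
    HasDerivAt (fun x => ∫ s in 0..t, f s * boundaryKernel a x s)
      (-(√a / √π) * ∫ s in 0..t, f s * heatProfileDeriv (a * γ ^ 2) s) γ := by
  have hIoc : Ι 0 t = Ioc 0 t := uIoc_of_le ht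
  obtain ⟨C, hC⟩ := exists_abs_heatProfileDeriv_le (c₀ := a * γ ^ 2 / 4) (by positivity)
    (9 * a * γ ^ 2 / 4) t
  obtain ⟨K, hK⟩ := exists_abs_boundaryKernel_le ha hγ t
  have hball : ∀ x ∈ Metric.ball γ (|γ| / 2),
      a * x ^ 2 ∈ Icc (a * γ ^ 2 / 4) (9 * a * γ ^ 2 / 4) := by
    intro x hx
    rw [Metric.mem_ball, Real.dist_eq] at hx
    have h₁ : |γ| / 2 ≤ |x| := by linarith [abs_sub_abs_le_abs_sub γ x, abs_sub_comm x γ]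
    have h₂ : |x| ≤ 3 * |γ| / 2 := by linarith [abs_sub_abs_le_abs_sub x γ]
    have h₃ := pow_le_pow_left₀ (by positivity) h₁ 2
    have h₄ := pow_le_pow_left₀ (abs_nonneg x) h₂ 2
    rw [div_pow, sq_abs, sq_abs] at h₃
    rw [div_pow, mul_pow, sq_abs, sq_abs] at h₄
    constructor <;> nlinarith
  have hmeas : ∀ x, Measurable (boundaryKernel a x) := by unfold boundaryKernel; fun_prop
  have hmeas' : Measurable (heatProfileDeriv (a * γ ^ 2)) := by unfold heatProfileDeriv; fun_prop
  have hf' := hf.def'.integrable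
  have hdom := hasDerivAt_integral_of_dominated_loc_of_deriv_le
    (F := fun x s => f s * boundaryKernel a x s)
    (F' := fun x s => f s * (-(√a / √π) * heatProfileDeriv (a * x ^ 2) s))
    (bound := fun s => ‖f s‖ * (√a / √π * C))
    (Metric.ball_mem_nhds γ (by positivity : (0 : ℝ) < |γ| / 2))
    (Eventually.of_forall fun x => hf'.1.mul (hmeas x).aestronglyMeasurable)
    (intervalIntegrable_iff.2 <| hf'.mul_bdd (hmeas γ).aestronglyMeasurable <| by
      rw [hIoc]; exact (ae_restrict_iff' measurableSet_Ioc).2 (ae_of_all _ hK))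
    (hf'.1.mul (hmeas'.aestronglyMeasurable.const_mul _))
    (ae_of_all _ fun s hs x hx => by
      rw [norm_mul, norm_mul, norm_neg,
        Real.norm_of_nonneg (by positivity : (0 : ℝ) ≤ √a / √π)]
      gcongr
      exact hC _ (hball x hx) s (hIoc ▸ hs))
    (hf.norm.mul_const _)
    (ae_of_all _ fun s hs x _ =>
      (hasDerivAt_boundaryKernel a (hIoc ▸ hs).1 x).const_mul (f s))
  refine hdom.2.congr_deriv ?_
  rw [← intervalIntegral.integral_const_mul]
  congr 1 with s
  ring

theorem integral_comp_sub_mul_deriv {u g g' : ℝ → ℝ} {t : ℝ} (ht : 0 < t)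
    (hu : ContDiffOn ℝ 1 u (Icc 0 t)) (hg : ContinuousOn g (Icc 0 t))
    (hgg' : ∀ s ∈ Ioo 0 t, HasDerivAt g (g' s) s) (hg' : IntervalIntegrable g' volume 0 t) :
    ∫ s in 0..t, u (t - s) * g' s =
      u 0 * g t - u t * g 0 + ∫ s in 0..t, derivWithin u (Icc 0 t) (t - s) * g s := by
  have hmaps : MapsTo (fun s => t - s) (Icc 0 t) (Icc 0 t) :=
    fun s hs => ⟨by linarith [hs.2], by linarith [hs.1]⟩
  have hu' : ContinuousOn (derivWithin u (Icc 0 t)) (Icc 0 t) :=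
    hu.continuousOn_derivWithin (uniqueDiffOn_Icc ht) le_rfl
  have hreflect : ContinuousOn (fun s => t - s) (Icc 0 t) := by fun_prop
  have hderiv : ∀ s ∈ Ioo 0 t,
      HasDerivAt (fun s => u (t - s)) (-derivWithin u (Icc 0 t) (t - s)) s := by
    intro s hs
    have hmem : t - s ∈ Ioo 0 t := ⟨by linarith [hs.2], by linarith [hs.1]⟩
    exact (((hu.differentiableOn one_ne_zero _ (Ioo_subset_Icc_self hmem)).hasDerivWithinAt
      ).hasDerivAt (Icc_mem_nhds hmem.1 hmem.2)).comp_const_sub t s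
  have hIoo : Ioo (min 0 t) (max 0 t) = Ioo 0 t := by rw [min_eq_left ht.le, max_eq_right ht.le]
  have hparts := integral_mul_deriv_eq_deriv_mul_of_hasDerivAt (v := g) (v' := g')
    (by rw [uIcc_of_le ht.le]; exact hu.continuousOn.comp hreflect hmaps)
    (by rwa [uIcc_of_le ht.le]) (by rwa [hIoo]) (by rwa [hIoo])
    ((hu'.comp hreflect hmaps).neg.intervalIntegrable_of_Icc ht.le) hg'
  simp only [Function.comp_apply, Pi.neg_apply, sub_self, sub_zero, neg_mul,
    intervalIntegral.integral_neg] at hparts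
  rw [hparts]
  ring

theorem integral_comp_sub_mul_heatProfileDeriv {u : ℝ → ℝ} {c t : ℝ} (hc : 0 < c)
    (ht : 0 < t) (hu : ContDiffOn ℝ 1 u (Icc 0 t)) :
    ∫ s in 0..t, u (t - s) * heatProfileDeriv c s =
      u 0 * heatProfile c t + ∫ s in 0..t, derivWithin u (Icc 0 t) (t - s) * heatProfile c s := by
  rw [integral_comp_sub_mul_deriv ht hu ((continuousOn_heatProfile hc).mono Icc_subset_Ici_self)
    (fun s hs => hasDerivAt_heatProfile c hs.1) (intervalIntegrable_heatProfileDeriv hc ht.le),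
    heatProfile_zero, mul_zero, sub_zero]

/-- computational core of Proposition 3.5 of the paper: the
γ-derivative of the boundary-kernel convolution with a C¹ forcing u. -/
theorem boundary_kernel_convolution_deriv
    (a t : ℝ) (ha : 0 < a) (ht : 0 < t)
    (u : ℝ → ℝ)
    (hu : ContDiffOn ℝ 1 u (Set.Icc 0 t)) :
    ∀ γ : ℝ, 0 < γ →
      deriv (fun γ' => ∫ s in (0 : ℝ)..t,
          u (t - s) * (Real.sqrt a * γ' / (2 * Real.sqrt Real.pi * s ^ ((3 : ℝ) / 2)) *
            Real.exp (-(a * γ' ^ 2 / (4 * s))))) γ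
      = -(Real.sqrt a / Real.sqrt Real.pi) *
          (u 0 * Real.exp (-(a * γ ^ 2 / (4 * t))) / Real.sqrt t
            + ∫ s in (0 : ℝ)..t,
                derivWithin u (Set.Icc 0 t) (t - s) *
                  Real.exp (-(a * γ ^ 2 / (4 * s))) / Real.sqrt s) := by
  intro γ hγ
  have hreflect : IntervalIntegrable (fun s => u (t - s)) volume 0 t := by
    simpa using ((hu.continuousOn.intervalIntegrable_of_Icc ht.le).comp_sub_left t).symm
  refine (hasDerivAt_integral_mul_boundaryKernel ha ht.le hγ.ne' hreflect).deriv.trans ?_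
  rw [integral_comp_sub_mul_heatProfileDeriv (by positivity) ht hu]
  simp only [heatProfile, mul_div_assoc]
end

section
/- Let a > 0 and t > 0, and let u : [0,t] → ℝ be continuously differentiable. Then lim_{γ → 0⁺} ∂/∂γ [ ∫_0^t u(t−s)·(√a·γ/(2√π·s^{3/2}))·e^{−aγ²/(4s)} ds ] = −(√a/√π)·( u(0)/√t + ∫_0^t u'(t−s)/√s ds ). -/
open Real MeasureTheory intervalIntegral Filter Topology

open Set
open scoped Interval Nat

/-! The `γ`-derivative of the kernel `K(γ, s)` is the `s`-derivative of
`m(γ, s) = -(√a / √π) e^{-aγ²/(4s)} / √s` (both are `kernelDeriv`). Hence, for `γ > 0`,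
differentiating under the integral sign and integrating by parts in `s` gives
`∂_γ ∫₀ᵗ u(t - s) K(γ, s) ds = u(0) m(γ, t) + ∫₀ᵗ u'(t - s) m(γ, s) ds`, the boundary term at
`s = 0` vanishing since `m(γ, 0⁺) = 0`. The right-hand side is continuous in `γ` by dominated
convergence with the majorant `sup |u'| · √a / (√π √s)`, and at `γ = 0` it is the claimed limit. -/

theorem rpow_mul_exp_neg_le {x p : ℝ} (n : ℕ) (hx : 0 ≤ x) (hp : 0 ≤ p) (hpn : p ≤ n) :
    x ^ p * exp (-x) ≤ 1 + n ! := by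
  have hxp : x ^ p ≤ 1 + x ^ n := by
    rcases le_total x 1 with h | h
    · linarith [rpow_le_one hx h hp, pow_nonneg hx n]
    · calc x ^ p ≤ x ^ (n : ℝ) := rpow_le_rpow_of_exponent_le h hpn
        _ = x ^ n := rpow_natCast x n
        _ ≤ 1 + x ^ n := by linarith
  have hpow : x ^ n * exp (-x) ≤ n ! := by
    have h := pow_div_factorial_le_exp x hx n
    rw [div_le_iff₀ (by positivity)] at h
    rw [exp_neg, ← div_eq_mul_inv, div_le_iff₀ (exp_pos x)]
    linarith
  calc x ^ p * exp (-x) ≤ (1 + x ^ n) * exp (-x) := by gcongr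
    _ = exp (-x) + x ^ n * exp (-x) := by ring
    _ ≤ 1 + n ! := add_le_add (exp_le_one_iff.2 (by linarith)) hpow

theorem exp_neg_div_div_rpow_le {c₀ c σ p : ℝ} (n : ℕ) (hc₀ : 0 < c₀) (hc : c₀ ≤ c)
    (hσ : 0 < σ) (hp : 0 ≤ p) (hpn : p ≤ n) :
    exp (-(c / σ)) / σ ^ p ≤ (1 + n !) / c₀ ^ p := by
  have hbound := rpow_mul_exp_neg_le n (div_pos hc₀ hσ).le hp hpn
  rw [div_rpow hc₀.le hσ.le] at hbound
  calc exp (-(c / σ)) / σ ^ p ≤ exp (-(c₀ / σ)) / σ ^ p := by gcongr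
    _ = c₀ ^ p / σ ^ p * exp (-(c₀ / σ)) / c₀ ^ p := by
      field_simp [(rpow_pos_of_pos hc₀ p).ne']
    _ ≤ (1 + n !) / c₀ ^ p := by gcongr

theorem tendsto_exp_neg_div_div_rpow_nhdsGT_zero {c : ℝ} (p : ℝ) (hc : 0 < c) :
    Tendsto (fun σ : ℝ => exp (-(c / σ)) / σ ^ p) (𝓝[>] 0) (𝓝 0) := by
  refine ((tendsto_rpow_mul_exp_neg_mul_atTop_nhds_zero p c hc).comp
    tendsto_inv_nhdsGT_zero).congr' ?_
  filter_upwards [self_mem_nhdsWithin] with σ (hσ : 0 < σ)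
  simp only [Function.comp, inv_rpow hσ.le, div_eq_mul_inv, mul_neg, mul_comm]

theorem rpow_three_halves {σ : ℝ} (hσ : 0 < σ) : σ ^ ((3 : ℝ) / 2) = σ * √σ := by
  rw [show (3 : ℝ) / 2 = 1 + 1 / 2 by norm_num, rpow_add hσ, rpow_one, sqrt_eq_rpow]

theorem rpow_five_halves {σ : ℝ} (hσ : 0 < σ) : σ ^ ((5 : ℝ) / 2) = σ ^ 2 * √σ := by
  rw [show (5 : ℝ) / 2 = 2 + 1 / 2 by norm_num, rpow_add hσ, sqrt_eq_rpow, rpow_two]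

theorem ContinuousOn.comp_const_sub_Icc {g : ℝ → ℝ} {t : ℝ} (hg : ContinuousOn g (Icc 0 t)) :
    ContinuousOn (fun s => g (t - s)) (Icc 0 t) :=
  hg.comp (by fun_prop) fun s hs => ⟨by linarith [hs.2], by linarith [hs.1]⟩

theorem intervalIntegrable_inv_sqrt {t : ℝ} (ht : 0 ≤ t) :
    IntervalIntegrable (fun s => (√s)⁻¹) volume 0 t := by
  refine (intervalIntegrable_rpow' (r := -(1 / 2)) (by norm_num)).congr fun s hs => ?_
  rw [uIoc_of_le ht] at hs
  rw [rpow_neg hs.1.le, sqrt_eq_rpow]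

theorem intervalIntegrable_of_forall_pos_abs_le {f : ℝ → ℝ} {t C : ℝ} (ht : 0 ≤ t)
    (hf : Measurable f) (hC : ∀ σ > 0, |f σ| ≤ C) : IntervalIntegrable f volume 0 t :=
  intervalIntegrable_const.mono_fun' hf.aestronglyMeasurable <|
    ae_restrict_of_forall_mem measurableSet_uIoc fun s hs => hC s (uIoc_of_le ht ▸ hs).1

namespace BoundaryLayer

noncomputable def kernel (a γ s : ℝ) : ℝ :=
  √a * γ / (2 * √π * s ^ ((3 : ℝ) / 2)) * exp (-(a * γ ^ 2 / (4 * s)))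

noncomputable def kernelDeriv (a γ s : ℝ) : ℝ :=
  √a / (2 * √π) * (exp (-(a * γ ^ 2 / 4 / s)) / s ^ ((3 : ℝ) / 2)
    - a * γ ^ 2 / 2 * (exp (-(a * γ ^ 2 / 4 / s)) / s ^ ((5 : ℝ) / 2)))

noncomputable def shearKernel (a γ s : ℝ) : ℝ :=
  -(√a / √π) * (exp (-(a * γ ^ 2 / (4 * s))) / √s)

variable {a γ σ t : ℝ}

theorem hasDerivAt_kernel (hσ : 0 < σ) (γ : ℝ) :
    HasDerivAt (fun γ => kernel a γ σ) (kernelDeriv a γ σ) γ := by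
  have h := ((hasDerivAt_id γ).const_mul √a |>.div_const (2 * √π * σ ^ ((3 : ℝ) / 2))).mul
    (((hasDerivAt_pow 2 γ).const_mul a |>.div_const (4 * σ)).neg.exp)
  refine h.congr_deriv ?_
  simp only [id, Pi.neg_apply]
  unfold kernelDeriv
  rw [rpow_three_halves hσ, rpow_five_halves hσ, div_div]
  have := sqrt_pos.2 hσ
  have := sqrt_pos.2 pi_pos
  field_simp
  ring

theorem hasDerivAt_shearKernel (hσ : 0 < σ) :
    HasDerivAt (shearKernel a γ) (kernelDeriv a γ σ) σ := by
  have h := ((hasDerivAt_const σ (a * γ ^ 2)).div ((hasDerivAt_id σ).const_mul 4)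
    (by positivity)).neg.exp.div (hasDerivAt_sqrt hσ.ne') (sqrt_pos.2 hσ).ne'
    |>.const_mul (-(√a / √π))
  refine h.congr_deriv ?_
  simp only [id, Pi.neg_apply, Pi.div_apply]
  unfold kernelDeriv
  rw [rpow_three_halves hσ, rpow_five_halves hσ, div_div]
  have := sqrt_pos.2 hσ
  have := sqrt_pos.2 pi_pos
  field_simp
  rw [sq_sqrt hσ.le]
  ring

theorem exists_bound_kernel (ha : 0 < a) (hγ : 0 < γ) : ∃ C, ∀ σ > 0, |kernel a γ σ| ≤ C := by
  have hc : 0 < a * γ ^ 2 / 4 := by positivity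
  refine ⟨√a * γ / (2 * √π) * ((1 + 2 !) / (a * γ ^ 2 / 4) ^ ((3 : ℝ) / 2)), fun σ hσ => ?_⟩
  have hkernel : kernel a γ σ
      = √a * γ / (2 * √π) * (exp (-(a * γ ^ 2 / 4 / σ)) / σ ^ ((3 : ℝ) / 2)) := by
    rw [kernel, div_div]
    ring
  rw [hkernel, abs_mul, abs_of_nonneg (by positivity), abs_of_nonneg (by positivity)]
  exact mul_le_mul_of_nonneg_left
    (exp_neg_div_div_rpow_le (p := 3 / 2) 2 hc le_rfl hσ (by norm_num) (by norm_num))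
    (by positivity)

theorem exists_bound_kernelDeriv {γ₀ : ℝ} (ha : 0 < a) (hγ₀ : 0 < γ₀) (γ₁ : ℝ) :
    ∃ C, ∀ γ ∈ Icc γ₀ γ₁, ∀ σ > 0, |kernelDeriv a γ σ| ≤ C := by
  set c₀ := a * γ₀ ^ 2 / 4
  have hc₀ : 0 < c₀ := by positivity
  refine ⟨√a / (2 * √π) * ((1 + 2 !) / c₀ ^ ((3 : ℝ) / 2)
    + a * γ₁ ^ 2 / 2 * ((1 + 3 !) / c₀ ^ ((5 : ℝ) / 2))), fun γ hγ σ hσ => ?_⟩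
  have hγ0 : 0 ≤ γ := hγ₀.le.trans hγ.1
  have hc : c₀ ≤ a * γ ^ 2 / 4 := by simp only [c₀]; gcongr; exact hγ.1
  have hγ₁ : a * γ ^ 2 / 2 ≤ a * γ₁ ^ 2 / 2 := by gcongr; exact hγ.2
  have h3 := exp_neg_div_div_rpow_le (p := 3 / 2) 2 hc₀ hc hσ (by norm_num) (by norm_num)
  have h5 := exp_neg_div_div_rpow_le (p := 5 / 2) 3 hc₀ hc hσ (by norm_num) (by norm_num)
  rw [kernelDeriv, abs_mul, abs_of_nonneg (by positivity)]
  gcongr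
  refine (abs_sub _ _).trans ?_
  rw [abs_of_nonneg (by positivity), abs_of_nonneg (by positivity)]
  exact add_le_add h3 (mul_le_mul hγ₁ h5 (by positivity) (by positivity))

-- `√0 = 0` and `x / 0 = 0`; for `γ ≠ 0` this is the limit at `0⁺` (`continuousOn_shearKernel`).
theorem shearKernel_zero_right (a γ : ℝ) : shearKernel a γ 0 = 0 := by
  simp [shearKernel]

theorem continuousOn_shearKernel (ha : 0 < a) (hγ : γ ≠ 0) :
    ContinuousOn (shearKernel a γ) (Ici 0) := by
  intro σ hσ
  rcases (mem_Ici.1 hσ).eq_or_lt with rfl | hσ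
  · rw [← continuousWithinAt_Ioi_iff_Ici, ContinuousWithinAt, shearKernel_zero_right]
    have h := (tendsto_exp_neg_div_div_rpow_nhdsGT_zero (1 / 2)
      (show 0 < a * γ ^ 2 / 4 by positivity)).const_mul (-(√a / √π))
    rw [mul_zero] at h
    refine h.congr' ?_
    filter_upwards [self_mem_nhdsWithin] with σ (hσ : 0 < σ)
    rw [shearKernel, div_div, ← sqrt_eq_rpow]
  · exact (hasDerivAt_shearKernel hσ).continuousAt.continuousWithinAt

theorem abs_shearKernel_le (ha : 0 ≤ a) (hσ : 0 < σ) (γ : ℝ) :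
    |shearKernel a γ σ| ≤ √a / √π * (√σ)⁻¹ := by
  have hexp : exp (-(a * γ ^ 2 / (4 * σ))) ≤ 1 := exp_le_one_iff.2 (neg_nonpos.2 (by positivity))
  rw [shearKernel, abs_mul, abs_neg, abs_of_nonneg (by positivity), abs_of_nonneg (by positivity),
    div_eq_mul_inv _ √σ]
  gcongr
  exact mul_le_of_le_one_left (by positivity) hexp

theorem measurable_kernel (a γ : ℝ) : Measurable (kernel a γ) := by
  unfold kernel; fun_prop

theorem measurable_kernelDeriv (a γ : ℝ) : Measurable (kernelDeriv a γ) := by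
  unfold kernelDeriv; fun_prop

theorem measurable_shearKernel (a γ : ℝ) : Measurable (shearKernel a γ) := by
  unfold shearKernel; fun_prop

theorem continuous_shearKernel_left (a σ : ℝ) : Continuous fun γ => shearKernel a γ σ := by
  unfold shearKernel; fun_prop

theorem hasDerivAt_integral_mul_kernel {f : ℝ → ℝ} (ha : 0 < a) (hγ : 0 < γ) (ht : 0 ≤ t)
    (hf : ContinuousOn f (Icc 0 t)) :
    HasDerivAt (fun γ => ∫ s in 0..t, f s * kernel a γ s)
      (∫ s in 0..t, f s * kernelDeriv a γ s) γ := by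
  obtain ⟨M, hM⟩ := isCompact_Icc.exists_bound_of_continuousOn hf
  obtain ⟨K, hK⟩ := exists_bound_kernel ha hγ
  obtain ⟨C, hC⟩ := exists_bound_kernelDeriv ha (half_pos hγ) (3 * γ / 2)
  have hball : Metric.ball γ (γ / 2) ⊆ Icc (γ / 2) (3 * γ / 2) := fun x hx => by
    rw [Metric.mem_ball, dist_eq, abs_lt] at hx
    constructor <;> linarith
  have hfm : AEStronglyMeasurable f (volume.restrict (Ι 0 t)) :=
    (hf.mono (uIcc_of_le ht ▸ uIoc_subset_uIcc)).aestronglyMeasurable measurableSet_uIoc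
  refine (intervalIntegral.hasDerivAt_integral_of_dominated_loc_of_deriv_le
    (F := fun γ s => f s * kernel a γ s) (F' := fun γ s => f s * kernelDeriv a γ s)
    (bound := fun _ => M * C)
    (Metric.ball_mem_nhds γ (half_pos hγ))
    (Eventually.of_forall fun γ => hfm.mul (measurable_kernel a γ).aestronglyMeasurable) ?_
    (hfm.mul (measurable_kernelDeriv a γ).aestronglyMeasurable) ?_ intervalIntegrable_const ?_).2
  · rw [← uIcc_of_le ht] at hf
    exact (intervalIntegrable_of_forall_pos_abs_le ht (measurable_kernel a γ) hK).continuousOn_mul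
      hf
  · refine Eventually.of_forall fun s hs x hx => ?_
    rw [uIoc_of_le ht] at hs
    rw [norm_mul]
    exact mul_le_mul (hM s (Ioc_subset_Icc_self hs)) (hC x (hball hx) s hs.1) (norm_nonneg _)
      ((norm_nonneg _).trans (hM s (Ioc_subset_Icc_self hs)))
  · refine Eventually.of_forall fun s hs x _ => ?_
    rw [uIoc_of_le ht] at hs
    exact (hasDerivAt_kernel hs.1 x).const_mul (f s)

theorem integral_mul_kernelDeriv {u : ℝ → ℝ} (ha : 0 < a) (hγ : 0 < γ) (ht : 0 < t)
    (hu : ContDiffOn ℝ 1 u (Icc 0 t)) :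
    ∫ s in 0..t, u (t - s) * kernelDeriv a γ s
      = u 0 * shearKernel a γ t
        + ∫ s in 0..t, derivWithin u (Icc 0 t) (t - s) * shearKernel a γ s := by
  have hu' : ContinuousOn (derivWithin u (Icc 0 t)) (Icc 0 t) :=
    hu.continuousOn_derivWithin (uniqueDiffOn_Icc ht) le_rfl
  have hderiv (s : ℝ) (hs : s ∈ Ioo 0 t) :
      HasDerivAt (fun s => u (t - s)) (-derivWithin u (Icc 0 t) (t - s)) s := by
    have hts : t - s ∈ Ioo 0 t := ⟨by linarith [hs.2], by linarith [hs.1]⟩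
    exact HasDerivAt.comp_const_sub t s <|
      (hu.differentiableOn one_ne_zero _ (Ioo_subset_Icc_self hts)).hasDerivWithinAt.hasDerivAt
        (Icc_mem_nhds hts.1 hts.2)
  obtain ⟨C, hC⟩ := exists_bound_kernelDeriv ha hγ γ
  have hI : [[0, t]] = Icc 0 t := uIcc_of_le ht.le
  have h := integral_mul_deriv_eq_deriv_mul_of_hasDerivAt (u := fun s => u (t - s))
    (u' := fun s => -derivWithin u (Icc 0 t) (t - s))
    (hI ▸ hu.continuousOn.comp_const_sub_Icc)
    ((continuousOn_shearKernel ha hγ.ne').mono (hI ▸ Icc_subset_Ici_self))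
    (by rwa [min_eq_left ht.le, max_eq_right ht.le])
    (fun s hs => hasDerivAt_shearKernel (by rw [min_eq_left ht.le] at hs; exact hs.1))
    (hu'.comp_const_sub_Icc.neg.intervalIntegrable_of_Icc ht.le)
    (intervalIntegrable_of_forall_pos_abs_le ht.le (measurable_kernelDeriv a γ)
      (hC γ ⟨le_rfl, le_rfl⟩))
  rw [h, sub_self, shearKernel_zero_right, mul_zero, sub_zero]
  simp only [neg_mul, intervalIntegral.integral_neg, sub_neg_eq_add]

theorem continuous_integral_mul_shearKernel {g : ℝ → ℝ} (ha : 0 ≤ a) (ht : 0 ≤ t)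
    (hg : ContinuousOn g (Icc 0 t)) :
    Continuous fun γ => ∫ s in 0..t, g s * shearKernel a γ s := by
  obtain ⟨M, hM⟩ := isCompact_Icc.exists_bound_of_continuousOn hg
  have hgm : AEStronglyMeasurable g (volume.restrict (Ι 0 t)) :=
    (hg.mono (uIcc_of_le ht ▸ uIoc_subset_uIcc)).aestronglyMeasurable measurableSet_uIoc
  refine continuous_of_dominated_interval (bound := fun s => M * (√a / √π) * (√s)⁻¹)
    (fun γ => hgm.mul (measurable_shearKernel a γ).aestronglyMeasurable) (fun γ => ?_)
    ((intervalIntegrable_inv_sqrt ht).const_mul (M * (√a / √π)))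
    (Eventually.of_forall fun s _ => continuous_const.mul (continuous_shearKernel_left a s))
  · refine Eventually.of_forall fun s hs => ?_
    rw [uIoc_of_le ht] at hs
    rw [norm_mul, mul_assoc]
    exact mul_le_mul (hM s (Ioc_subset_Icc_self hs)) (abs_shearKernel_le ha hs.1 γ) (norm_nonneg _)
      ((norm_nonneg _).trans (hM s (Ioc_subset_Icc_self hs)))

end BoundaryLayer

open BoundaryLayer

/-- Proposition 3.5 of the paper, the bottom shear stress: the
limit as γ → 0⁺ of the γ-derivative of the boundary-kernel convolution. -/
theorem bottom_shear_stress
    (a t : ℝ) (ha : 0 < a) (ht : 0 < t)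
    (u : ℝ → ℝ)
    (hu : ContDiffOn ℝ 1 u (Set.Icc 0 t)) :
    Tendsto (fun γ : ℝ =>
        deriv (fun γ' => ∫ s in (0 : ℝ)..t,
          u (t - s) * (Real.sqrt a * γ' / (2 * Real.sqrt Real.pi * s ^ ((3 : ℝ) / 2)) *
            Real.exp (-(a * γ' ^ 2 / (4 * s))))) γ)
      (nhdsWithin 0 (Set.Ioi 0))
      (nhds (-(Real.sqrt a / Real.sqrt Real.pi) *
        (u 0 / Real.sqrt t
          + ∫ s in (0 : ℝ)..t, derivWithin u (Set.Icc 0 t) (t - s) / Real.sqrt s))) := by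
  have hu' : ContinuousOn (derivWithin u (Icc 0 t)) (Icc 0 t) :=
    hu.continuousOn_derivWithin (uniqueDiffOn_Icc ht) le_rfl
  have hderiv : ∀ γ > 0, deriv (fun γ => ∫ s in 0..t, u (t - s) * kernel a γ s) γ
      = u 0 * shearKernel a γ t
        + ∫ s in 0..t, derivWithin u (Icc 0 t) (t - s) * shearKernel a γ s := fun γ hγ => by
    rw [(hasDerivAt_integral_mul_kernel ha hγ ht.le hu.continuousOn.comp_const_sub_Icc).deriv,
      integral_mul_kernelDeriv ha hγ ht hu]
  have hcont : Continuous fun γ => u 0 * shearKernel a γ t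
      + ∫ s in 0..t, derivWithin u (Icc 0 t) (t - s) * shearKernel a γ s :=
    ((continuous_shearKernel_left a t).const_mul _).add
      (continuous_integral_mul_shearKernel ha.le ht.le hu'.comp_const_sub_Icc)
  have hlimit : u 0 * shearKernel a 0 t
      + ∫ s in 0..t, derivWithin u (Icc 0 t) (t - s) * shearKernel a 0 s
      = -(√a / √π) * (u 0 / √t + ∫ s in 0..t, derivWithin u (Icc 0 t) (t - s) / √s) := by
    simp only [shearKernel, zero_pow two_ne_zero, mul_zero, zero_div, neg_zero, exp_zero]
    rw [mul_add, ← intervalIntegral.integral_const_mul]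
    congr 1
    · ring
    · congr 1; ext s; ring
  rw [← hlimit]
  exact ((hcont.tendsto 0).mono_left nhdsWithin_le_nhds).congr'
    (eventually_nhdsWithin_of_forall fun γ hγ => (hderiv γ hγ).symm)
end

section
/- Let A > 0 and let g : [0,∞) → ℝ be continuous, bounded and (Lebesgue) integrable. Then lim_{γ → +∞} ∫_0^γ ( ∫_0^∞ g(s)·( e^{−A²(s−r)²} − e^{−A²(s+r)²} ) ds ) dr = ∫_0^∞ g(s)·( ∫_{−s}^{s} e^{−A²v²} dv ) ds. -/
open Real MeasureTheory intervalIntegral Filter Topology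

/-!
Integrating the kernel `f (s - r) - f (s + r)` in `r` over `[0, γ]` gives
`∫_{s-γ}^{s} f - ∫_{s}^{s+γ} f`, which is bounded by `‖f‖₁` and tends to
`∫_{-∞}^{s} f - ∫_{s}^{∞} f`, that is to `∫_{-s}^{s} f` for even `f`. Since `g` is integrable and
the kernel is bounded, Fubini lets us integrate in `r` first, and dominated convergence then
passes to the limit `γ → ∞`.
-/

namespace DoubleIntegralLimit

noncomputable def windowDiff (f : ℝ → ℝ) (γ s : ℝ) : ℝ :=
  (∫ v in (s - γ)..s, f v) - ∫ v in s..(s + γ), f v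

section Kernel

variable {f : ℝ → ℝ}

theorem integral_sub_comp_sub_add_eq_windowDiff (hf : Continuous f) (γ s : ℝ) :
    ∫ r in (0 : ℝ)..γ, (f (s - r) - f (s + r)) = windowDiff f γ s := by
  rw [intervalIntegral.integral_sub
    ((by fun_prop : Continuous fun r => f (s - r)).intervalIntegrable _ _)
    ((by fun_prop : Continuous fun r => f (s + r)).intervalIntegrable _ _)]
  simp [windowDiff, intervalIntegral.integral_comp_sub_left, intervalIntegral.integral_comp_add_left]

theorem continuous_windowDiff (hf : Continuous f) (γ : ℝ) : Continuous (windowDiff f γ) := by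
  rw [← funext (integral_sub_comp_sub_add_eq_windowDiff hf γ)]
  fun_prop

theorem abs_windowDiff_le (hf : Integrable f) {γ : ℝ} (hγ : 0 ≤ γ) (s : ℝ) :
    |windowDiff f γ s| ≤ ∫ v, |f v| := by
  have hfi : ∀ a b : ℝ, IntervalIntegrable (fun v => |f v|) volume a b :=
    fun a b => hf.abs.intervalIntegrable
  calc |windowDiff f γ s|
      ≤ |∫ v in (s - γ)..s, f v| + |∫ v in s..(s + γ), f v| := abs_sub _ _
    _ ≤ (∫ v in (s - γ)..s, |f v|) + ∫ v in s..(s + γ), |f v| :=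
        add_le_add (abs_integral_le_integral_abs (by linarith))
          (abs_integral_le_integral_abs (by linarith))
    _ = ∫ v in Set.Ioc (s - γ) (s + γ), |f v| := by
        rw [integral_add_adjacent_intervals (hfi _ _) (hfi _ _), integral_of_le (by linarith)]
    _ ≤ ∫ v, |f v| :=
        setIntegral_le_integral hf.abs (Eventually.of_forall fun v => abs_nonneg (f v))

theorem tendsto_windowDiff (hf : Integrable f) (s : ℝ) :
    Tendsto (fun γ => windowDiff f γ s) atTop
      (𝓝 ((∫ v in Set.Iic s, f v) - ∫ v in Set.Ioi s, f v)) := by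
  have hleft : Tendsto (fun γ : ℝ => s - γ) atTop atBot :=
    tendsto_atBot_add_const_left _ s tendsto_neg_atTop_atBot
  have hright : Tendsto (fun γ : ℝ => s + γ) atTop atTop :=
    tendsto_atTop_add_const_left _ s tendsto_id
  exact (intervalIntegral_tendsto_integral_Iic s hf.integrableOn hleft).sub
    (intervalIntegral_tendsto_integral_Ioi s hf.integrableOn hright)

theorem integral_Iic_sub_integral_Ioi_of_even (hf : Integrable f) (heven : ∀ x, f (-x) = f x)
    (s : ℝ) : (∫ v in Set.Iic s, f v) - ∫ v in Set.Ioi s, f v = ∫ v in (-s)..s, f v := by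
  rw [← integral_Iic_sub_Iic hf.integrableOn hf.integrableOn, ← integral_comp_neg_Ioi]
  simp only [heven]

end Kernel

section Layer

variable {f g : ℝ → ℝ} {μ : Measure ℝ}

theorem integral_integral_kernel_eq [SFinite μ] (hf : Continuous f) {M : ℝ}
    (hfM : ∀ x, |f x| ≤ M) (hg : Integrable g μ) {γ : ℝ} (hγ : 0 ≤ γ) :
    ∫ r in (0 : ℝ)..γ, ∫ s, g s * (f (s - r) - f (s + r)) ∂μ
      = ∫ s, g s * windowDiff f γ s ∂μ := by
  have hkernel : ∀ r s, ‖f (s - r) - f (s + r)‖ ≤ 2 * M := fun r s => by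
    rw [Real.norm_eq_abs]
    linarith [abs_sub (f (s - r)) (f (s + r)), hfM (s - r), hfM (s + r)]
  have hint : Integrable (Function.uncurry fun r s => g s * (f (s - r) - f (s + r)))
      ((volume.restrict (Set.Ioc 0 γ)).prod μ) := by
    refine (Integrable.mul_prod (integrable_const (2 * M)) hg.norm).mono'
      (hg.1.comp_snd.mul (by fun_prop : Continuous fun p : ℝ × ℝ =>
        f (p.2 - p.1) - f (p.2 + p.1)).aestronglyMeasurable)
      (Eventually.of_forall fun ⟨r, s⟩ => ?_)
    rw [Function.uncurry_apply_pair, norm_mul, mul_comm]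
    exact mul_le_mul_of_nonneg_right (hkernel r s) (norm_nonneg _)
  rw [integral_of_le hγ, integral_integral_swap hint]
  refine integral_congr_ae (Eventually.of_forall fun s => ?_)
  dsimp only
  rw [← integral_of_le hγ, intervalIntegral.integral_const_mul,
    integral_sub_comp_sub_add_eq_windowDiff hf]

theorem tendsto_integral_mul_windowDiff (hf : Continuous f) (hfi : Integrable f)
    (hg : Integrable g μ) :
    Tendsto (fun γ => ∫ s, g s * windowDiff f γ s ∂μ) atTop
      (𝓝 (∫ s, g s * ((∫ v in Set.Iic s, f v) - ∫ v in Set.Ioi s, f v) ∂μ)) := by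
  refine tendsto_integral_filter_of_dominated_convergence (fun s => ‖g s‖ * ∫ v, |f v|)
    (Eventually.of_forall fun γ =>
      hg.1.mul (continuous_windowDiff hf γ).aestronglyMeasurable) ?_
    (hg.norm.mul_const _) (ae_of_all _ fun s => (tendsto_windowDiff hfi s).const_mul (g s))
  filter_upwards [eventually_ge_atTop 0] with γ hγ
  refine ae_of_all _ fun s => ?_
  rw [norm_mul, Real.norm_eq_abs (windowDiff f γ s)]
  exact mul_le_mul_of_nonneg_left (abs_windowDiff_le hfi hγ s) (norm_nonneg _)

theorem tendsto_integral_integral_kernel [SFinite μ] (hf : Continuous f) (hfi : Integrable f)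
    {M : ℝ} (hfM : ∀ x, |f x| ≤ M) (hg : Integrable g μ) :
    Tendsto (fun γ => ∫ r in (0 : ℝ)..γ, ∫ s, g s * (f (s - r) - f (s + r)) ∂μ) atTop
      (𝓝 (∫ s, g s * ((∫ v in Set.Iic s, f v) - ∫ v in Set.Ioi s, f v) ∂μ)) :=
  (tendsto_integral_mul_windowDiff hf hfi hg).congr' <| by
    filter_upwards [eventually_ge_atTop 0] with γ hγ
    exact (integral_integral_kernel_eq hf hfM hg hγ).symm

end Layer

end DoubleIntegralLimit

open DoubleIntegralLimit in
theorem double_integral_limit_general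
    (A : ℝ) (hA : 0 < A)
    (g : ℝ → ℝ)
    (hgint : IntegrableOn g (Set.Ici 0)) :
    Tendsto (fun γ : ℝ =>
      ∫ r in (0 : ℝ)..γ,
        ∫ s in Set.Ioi (0 : ℝ), g s *
          (Real.exp (-(A ^ 2 * (s - r) ^ 2)) - Real.exp (-(A ^ 2 * (s + r) ^ 2))))
      atTop
      (nhds (∫ s in Set.Ioi (0 : ℝ), g s * ∫ v in (-s)..s, Real.exp (-(A ^ 2 * v ^ 2)))) := by
  set f : ℝ → ℝ := fun v => Real.exp (-(A ^ 2 * v ^ 2))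
  have hfi : Integrable f := by
    simpa only [neg_mul] using integrable_exp_neg_mul_sq (pow_pos hA 2)
  have hfM : ∀ v, |f v| ≤ 1 := fun v => by
    rw [abs_of_pos (exp_pos _), exp_le_one_iff, neg_nonpos]
    positivity
  have hfeven : ∀ v, f (-v) = f v := fun v => by simp only [f, neg_sq]
  simpa only [integral_Iic_sub_integral_Ioi_of_even hfi hfeven] using
    tendsto_integral_integral_kernel (by fun_prop) hfi hfM
      (hgint.mono_set Set.Ioi_subset_Ici_self)

/-- Lemma 3.7 of the paper: the double integral over the boundary
layer of the odd-reflection kernel applied to g converges, as the layer width γ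
tends to infinity, to the stated iterated integral. -/
theorem double_integral_limit
    (A : ℝ) (hA : 0 < A)
    (g : ℝ → ℝ)
    (hgcont : ContinuousOn g (Set.Ici 0))
    (hgbdd : ∃ C, ∀ s ≥ (0 : ℝ), |g s| ≤ C)
    (hgint : IntegrableOn g (Set.Ici 0)) :
    Tendsto (fun γ : ℝ =>
      ∫ r in (0 : ℝ)..γ,
        ∫ s in Set.Ioi (0 : ℝ), g s *
          (Real.exp (-(A ^ 2 * (s - r) ^ 2)) - Real.exp (-(A ^ 2 * (s + r) ^ 2))))
      atTop
      (nhds (∫ s in Set.Ioi (0 : ℝ), g s * ∫ v in (-s)..s, Real.exp (-(A ^ 2 * v ^ 2)))) :=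
  double_integral_limit_general A hA g hgint
end
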